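/- arXiv:1801.06912 — 10 statements merged into one kernel-verified Lean document; each statement's English description precedes it below -/
import Mathlib

section
/- Let V : ℝ → ℝ be a smooth (infinitely differentiable) function, let B_j denote the j-th Bernoulli polynomial, and define μ_{j,1}(h) = ∫_0^h h^j B_j(ζ/h) V(ζ) dζ. Then for every integer j ≥ 1, one has μ_{j,1}(h) = O(h^{j+2}) as h → 0⁺ (one extra power of h compared to the generic bound O(h^{j+1}), because the integral of a Bernoulli polynomial over a full period vanishes). -/
/-- For smooth `V` and `j ≥ 1`,
`μ_{j,1}(h) = ∫_0^h h^j B_j(ζ/h) V(ζ) dζ = O(h^{j+2})` as `h → 0⁺`. -/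
theorem mu_j1_bigO (V : ℝ → ℝ) (hV : ContDiff ℝ (⊤ : ℕ∞) V) (j : ℕ) (hj : 1 ≤ j) :
    ∃ C > (0:ℝ), ∃ δ > (0:ℝ), ∀ h : ℝ, 0 < h → h < δ →
      |∫ ζ in (0:ℝ)..h,
          (h ^ j * Polynomial.aeval (ζ / h) (Polynomial.bernoulli j)) * V ζ|
        ≤ C * h ^ (j + 2) := by
  have hVc : Continuous V := hV.continuous
  have hVd : Differentiable ℝ V := hV.differentiable (by simp)
  have hVdc : Continuous (deriv V) := hV.continuous_deriv (by simp)
  -- bound on deriv V on [0,1]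
  obtain ⟨L₀, hL₀⟩ := isCompact_Icc.exists_bound_of_continuousOn
    (s := Set.Icc (0:ℝ) 1) hVdc.continuousOn
  set L : ℝ := max L₀ 0 with hLdef
  have hL : ∀ x ∈ Set.Icc (0:ℝ) 1, ‖deriv V x‖ ≤ L := fun x hx =>
    (hL₀ x hx).trans (le_max_left _ _)
  have hLnn : 0 ≤ L := le_max_right _ _
  -- bound on the Bernoulli function on [0,1]
  obtain ⟨M₀, hM₀⟩ := isCompact_Icc.exists_bound_of_continuousOn
    (s := Set.Icc (0:ℝ) 1) (f := bernoulliFun j) (Polynomial.continuous _).continuousOn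
  set M : ℝ := max M₀ 0 with hMdef
  have hM : ∀ x ∈ Set.Icc (0:ℝ) 1, ‖bernoulliFun j x‖ ≤ M := fun x hx =>
    (hM₀ x hx).trans (le_max_left _ _)
  have hMnn : 0 ≤ M := le_max_right _ _
  refine ⟨M * L + 1, by positivity, 1, one_pos, fun h hh hh1 => ?_⟩
  have hhne : h ≠ 0 := ne_of_gt hh
  -- rewrite aeval as bernoulliFun
  have haeval : ∀ x : ℝ, (Polynomial.aeval x (Polynomial.bernoulli j) : ℝ)
      = bernoulliFun j x := by
    intro x
    rw [bernoulliFun, Polynomial.eval_map, Polynomial.aeval_def]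
  -- integrability facts
  have hBcont : Continuous fun ζ : ℝ => bernoulliFun j (ζ / h) :=
    (Polynomial.continuous _).comp (continuous_id.div_const _)
  have hint1 : IntervalIntegrable (fun ζ => bernoulliFun j (ζ / h) * (V ζ - V 0))
      MeasureTheory.volume 0 h :=
    (hBcont.mul (hVc.sub continuous_const)).intervalIntegrable _ _
  have hint2 : IntervalIntegrable (fun ζ => bernoulliFun j (ζ / h) * V 0)
      MeasureTheory.volume 0 h :=
    (hBcont.mul continuous_const).intervalIntegrable _ _
  -- the full-period integral vanishes
  have hzero : (∫ ζ in (0:ℝ)..h, bernoulliFun j (ζ / h)) = 0 := by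
    rw [intervalIntegral.integral_comp_div (f := bernoulliFun j) hhne]
    rw [zero_div, div_self hhne, integral_bernoulliFun_eq_zero (by omega)]
    simp
  -- rewrite the integral
  have key : (∫ ζ in (0:ℝ)..h,
      (h ^ j * Polynomial.aeval (ζ / h) (Polynomial.bernoulli j)) * V ζ)
      = h ^ j * ∫ ζ in (0:ℝ)..h, bernoulliFun j (ζ / h) * (V ζ - V 0) := by
    have : (∫ ζ in (0:ℝ)..h,
        (h ^ j * Polynomial.aeval (ζ / h) (Polynomial.bernoulli j)) * V ζ)
        = h ^ j * ∫ ζ in (0:ℝ)..h, bernoulliFun j (ζ / h) * V ζ := by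
      rw [← intervalIntegral.integral_const_mul]
      congr 1; ext ζ; rw [haeval]; ring
    rw [this]
    congr 1
    have : (∫ ζ in (0:ℝ)..h, bernoulliFun j (ζ / h) * V ζ)
        = (∫ ζ in (0:ℝ)..h, bernoulliFun j (ζ / h) * (V ζ - V 0))
          + ∫ ζ in (0:ℝ)..h, bernoulliFun j (ζ / h) * V 0 := by
      rw [← intervalIntegral.integral_add hint1 hint2]
      congr 1; ext ζ; ring
    rw [this, intervalIntegral.integral_mul_const, hzero, zero_mul, add_zero]
  rw [key, abs_mul, abs_pow, abs_of_pos hh]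
  -- bound the remaining integral
  have hbound : ∀ ζ ∈ Set.uIoc (0:ℝ) h,
      ‖bernoulliFun j (ζ / h) * (V ζ - V 0)‖ ≤ M * (L * h) := by
    intro ζ hζ
    rw [Set.uIoc_of_le hh.le] at hζ
    obtain ⟨hζ0, hζh⟩ := hζ
    have hζ1 : ζ ∈ Set.Icc (0:ℝ) 1 := ⟨hζ0.le, hζh.trans hh1.le⟩
    have hB : ‖bernoulliFun j (ζ / h)‖ ≤ M := by
      apply hM
      exact ⟨div_nonneg hζ0.le hh.le, div_le_one_of_le₀ hζh hh.le⟩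
    have hVb : ‖V ζ - V 0‖ ≤ L * h := by
      have := Convex.norm_image_sub_le_of_norm_deriv_le (s := Set.Icc (0:ℝ) 1)
        (fun x _ => hVd x) hL (convex_Icc _ _) ⟨le_refl 0, zero_le_one⟩ hζ1
      simp only [sub_zero] at this
      calc ‖V ζ - V 0‖ ≤ L * ‖ζ‖ := this
        _ ≤ L * h := by
            apply mul_le_mul_of_nonneg_left _ hLnn
            rw [Real.norm_eq_abs, abs_of_nonneg hζ0.le]; exact hζh
    calc ‖bernoulliFun j (ζ / h) * (V ζ - V 0)‖
        = ‖bernoulliFun j (ζ / h)‖ * ‖V ζ - V 0‖ := norm_mul _ _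
      _ ≤ M * (L * h) := mul_le_mul hB hVb (norm_nonneg _) hMnn
  have := intervalIntegral.norm_integral_le_of_norm_le_const hbound
  rw [sub_zero, abs_of_pos hh] at this
  calc h ^ j * |∫ ζ in (0:ℝ)..h, bernoulliFun j (ζ / h) * (V ζ - V 0)|
      ≤ h ^ j * (M * (L * h) * h) := by
        apply mul_le_mul_of_nonneg_left this (by positivity)
    _ = M * L * h ^ (j + 2) := by ring
    _ ≤ (M * L + 1) * h ^ (j + 2) := by nlinarith [pow_pos hh (j + 2)]
end

section
/- Let p(h,ζ,ξ) be a polynomial in three real variables all of whose monomials have total degree exactly n (i.e. p is homogeneous of degree n), and suppose its integral over the triangle vanishes: ∫_0^h ∫_0^ζ p(h,ζ,ξ) dξ dζ = 0 for all h > 0. Let g₁, g₂ : ℝ → ℝ be smooth functions and define Λ(h) = ∫_0^h ∫_0^ζ p(h,ζ,ξ) g₁(ζ) g₂(ξ) dξ dζ. Then Λ(h) = O(h^{n+3}) as h → 0⁺, one extra power of h beyond the generic bound O(h^{n+2}). -/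
open MvPolynomial intervalIntegral Set
set_option maxHeartbeats 1000000


/-- For `p` a homogeneous polynomial of degree `n` in `(h,ζ,ξ)` whose
integral over the triangle `0 ≤ ξ ≤ ζ ≤ h` vanishes for all `h > 0`, and smooth
`g₁ g₂`, `Λ(h) = ∫_0^h ∫_0^ζ p(h,ζ,ξ) g₁(ζ) g₂(ξ) dξ dζ = O(h^{n+3})` as `h → 0⁺`. -/
theorem triangle_integral_vanishing_bigO (n : ℕ) (p : MvPolynomial (Fin 3) ℝ)
    (hp : p.IsHomogeneous n)
    (hvanish : ∀ h : ℝ, 0 < h →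
      (∫ ζ in (0:ℝ)..h, ∫ ξ in (0:ℝ)..ζ, MvPolynomial.eval ![h, ζ, ξ] p) = 0)
    (g₁ g₂ : ℝ → ℝ) (hg₁ : ContDiff ℝ (⊤ : ℕ∞) g₁) (hg₂ : ContDiff ℝ (⊤ : ℕ∞) g₂) :
    ∃ C > (0:ℝ), ∃ δ > (0:ℝ), ∀ h : ℝ, 0 < h → h < δ →
      |∫ ζ in (0:ℝ)..h, ∫ ξ in (0:ℝ)..ζ,
          MvPolynomial.eval ![h, ζ, ξ] p * g₁ ζ * g₂ ξ|
        ≤ C * h ^ (n + 3) := by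
  classical
  obtain ⟨L₁, t₁, ht₁, hL₁⟩ :=
    ((hg₁.of_le (by simp) : ContDiff ℝ 1 g₁).contDiffAt (x := 0)).exists_lipschitzOnWith
  obtain ⟨L₂, t₂, ht₂, hL₂⟩ :=
    ((hg₂.of_le (by simp) : ContDiff ℝ 1 g₂).contDiffAt (x := 0)).exists_lipschitzOnWith
  obtain ⟨ε₁, hε₁, hb₁⟩ := Metric.mem_nhds_iff.mp ht₁
  obtain ⟨ε₂, hε₂, hb₂⟩ := Metric.mem_nhds_iff.mp ht₂
  set K : ℝ := ∑ m ∈ p.support, |p.coeff m| with hK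
  have hK0 : 0 ≤ K := Finset.sum_nonneg fun _ _ => abs_nonneg _
  have hpoly : ∀ h ζ ξ : ℝ, 0 ≤ ξ → ξ ≤ ζ → ζ ≤ h →
      |MvPolynomial.eval ![h, ζ, ξ] p| ≤ K * h ^ n := by
    intro h ζ ξ h0 h1 h2
    rw [hK, eval_eq', Finset.sum_mul]
    refine (Finset.abs_sum_le_sum_abs _ _).trans (Finset.sum_le_sum fun d hd => ?_)
    have hdn : d 0 + d 1 + d 2 = n := by
      have := hp (mem_support_iff.mp hd)
      simpa [Finsupp.weight, Finsupp.linearCombination, Finsupp.sum_fintype,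
        Fin.sum_univ_three] using this
    rw [abs_mul]
    refine mul_le_mul_of_nonneg_left ?_ (abs_nonneg _)
    rw [Fin.prod_univ_three]
    simp only [Matrix.cons_val_zero, Matrix.cons_val_one, Matrix.head_cons,
      Matrix.cons_val_two, Matrix.tail_cons]
    have hh : 0 ≤ h := le_trans (le_trans h0 h1) h2
    have hz : 0 ≤ ζ := le_trans h0 h1
    calc |h ^ d 0 * ζ ^ d 1 * ξ ^ d 2| = h ^ d 0 * ζ ^ d 1 * ξ ^ d 2 := by
          rw [abs_of_nonneg]; positivity
      _ ≤ h ^ d 0 * h ^ d 1 * h ^ d 2 := by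
          gcongr <;> first | exact le_trans h1 h2 | exact h2
      _ = h ^ n := by rw [← pow_add, ← pow_add, hdn]
  -- the smooth-factor bound
  set B : ℝ := (L₁ : ℝ) * (|g₂ 0| + L₂) + |g₁ 0| * L₂ with hB
  have hB0 : 0 ≤ B := by positivity
  refine ⟨K * B + 1, by positivity, min 1 (min ε₁ ε₂), by positivity, fun h hh0 hhδ => ?_⟩
  have hh1 : h ≤ 1 := le_of_lt (lt_of_lt_of_le hhδ (min_le_left _ _))
  have hhε₁ : h < ε₁ := lt_of_lt_of_le hhδ ((min_le_right _ _).trans (min_le_left _ _))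
  have hhε₂ : h < ε₂ := lt_of_lt_of_le hhδ ((min_le_right _ _).trans (min_le_right _ _))
  have h0t₁ : (0:ℝ) ∈ t₁ := mem_of_mem_nhds ht₁
  have h0t₂ : (0:ℝ) ∈ t₂ := mem_of_mem_nhds ht₂
  have hmem₁ : ∀ x : ℝ, 0 ≤ x → x ≤ h → x ∈ t₁ := fun x hx hxh =>
    hb₁ (by simp [Metric.mem_ball, Real.dist_eq, abs_of_nonneg hx]; linarith)
  have hmem₂ : ∀ x : ℝ, 0 ≤ x → x ≤ h → x ∈ t₂ := fun x hx hxh =>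
    hb₂ (by simp [Metric.mem_ball, Real.dist_eq, abs_of_nonneg hx]; linarith)
  have hG : ∀ ζ ξ : ℝ, 0 ≤ ξ → ξ ≤ ζ → ζ ≤ h →
      |g₁ ζ * g₂ ξ - g₁ 0 * g₂ 0| ≤ B * h := by
    intro ζ ξ h0 h1 h2
    have hz : 0 ≤ ζ := le_trans h0 h1
    have e1 : |g₁ ζ - g₁ 0| ≤ (L₁ : ℝ) * ζ := by
      have := hL₁.dist_le_mul ζ (hmem₁ ζ hz h2) 0 h0t₁
      simpa [Real.dist_eq, abs_of_nonneg hz] using this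
    have e2 : |g₂ ξ - g₂ 0| ≤ (L₂ : ℝ) * ξ := by
      have := hL₂.dist_le_mul ξ (hmem₂ ξ h0 (h1.trans h2)) 0 h0t₂
      simpa [Real.dist_eq, abs_of_nonneg h0] using this
    have e3 : |g₂ ξ| ≤ |g₂ 0| + (L₂ : ℝ) := by
      have : |g₂ ξ| - |g₂ 0| ≤ |g₂ ξ - g₂ 0| := abs_sub_abs_le_abs_sub _ _
      have hξ1 : ξ ≤ 1 := le_trans (h1.trans h2) hh1
      nlinarith [e2, NNReal.coe_nonneg L₂]
    calc |g₁ ζ * g₂ ξ - g₁ 0 * g₂ 0|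
        = |(g₁ ζ - g₁ 0) * g₂ ξ + g₁ 0 * (g₂ ξ - g₂ 0)| := by ring_nf
      _ ≤ |(g₁ ζ - g₁ 0) * g₂ ξ| + |g₁ 0 * (g₂ ξ - g₂ 0)| := abs_add_le _ _
      _ = |g₁ ζ - g₁ 0| * |g₂ ξ| + |g₁ 0| * |g₂ ξ - g₂ 0| := by rw [abs_mul, abs_mul]
      _ ≤ ((L₁ : ℝ) * ζ) * (|g₂ 0| + L₂) + |g₁ 0| * ((L₂ : ℝ) * ξ) :=
          add_le_add (mul_le_mul e1 e3 (abs_nonneg _)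
              (mul_nonneg (NNReal.coe_nonneg _) hz))
            (mul_le_mul_of_nonneg_left e2 (abs_nonneg _))
      _ ≤ ((L₁ : ℝ) * h) * (|g₂ 0| + L₂) + |g₁ 0| * ((L₂ : ℝ) * h) := by
          gcongr <;> first | exact h2 | exact h1.trans h2 | positivity
      _ = B * h := by rw [hB]; ring
  -- continuity facts
  have hvec : Continuous fun q : ℝ × ℝ => (![h, q.1, q.2] : Fin 3 → ℝ) := by
    refine continuous_pi fun i => ?_
    fin_cases i <;> simp <;> fun_prop
  have hPc : Continuous fun q : ℝ × ℝ => MvPolynomial.eval ![h, q.1, q.2] p :=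
    (MvPolynomial.continuous_eval p).comp hvec
  have hg₁c := hg₁.continuous
  have hg₂c := hg₂.continuous
  have hF1c : Continuous fun q : ℝ × ℝ =>
      MvPolynomial.eval ![h, q.1, q.2] p * g₁ q.1 * g₂ q.2 :=
    (hPc.mul (hg₁c.comp continuous_fst)).mul (hg₂c.comp continuous_snd)
  have hF2c : Continuous fun q : ℝ × ℝ =>
      MvPolynomial.eval ![h, q.1, q.2] p * (g₁ q.1 * g₂ q.2 - g₁ 0 * g₂ 0) :=
    hPc.mul (((hg₁c.comp continuous_fst).mul (hg₂c.comp continuous_snd)).sub continuous_const)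
  -- split the integral
  have hsplit : ∀ ζ : ℝ,
      (∫ ξ in (0:ℝ)..ζ, MvPolynomial.eval ![h, ζ, ξ] p * g₁ ζ * g₂ ξ)
      = (g₁ 0 * g₂ 0) * (∫ ξ in (0:ℝ)..ζ, MvPolynomial.eval ![h, ζ, ξ] p)
        + ∫ ξ in (0:ℝ)..ζ, MvPolynomial.eval ![h, ζ, ξ] p * (g₁ ζ * g₂ ξ - g₁ 0 * g₂ 0) := by
    intro ζ
    rw [← intervalIntegral.integral_const_mul, ← intervalIntegral.integral_add]
    · congr 1; funext ξ; ring
    · exact ((continuous_const.mul (hPc.comp (Continuous.prodMk_right ζ))).intervalIntegrable _ _)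
    · exact ((hF2c.comp (Continuous.prodMk_right ζ)).intervalIntegrable _ _)
  have houter :
      (∫ ζ in (0:ℝ)..h, ∫ ξ in (0:ℝ)..ζ, MvPolynomial.eval ![h, ζ, ξ] p * g₁ ζ * g₂ ξ)
      = ∫ ζ in (0:ℝ)..h, ∫ ξ in (0:ℝ)..ζ,
          MvPolynomial.eval ![h, ζ, ξ] p * (g₁ ζ * g₂ ξ - g₁ 0 * g₂ 0) := by
    have hc1 : Continuous fun ζ : ℝ => ∫ ξ in (0:ℝ)..ζ, MvPolynomial.eval ![h, ζ, ξ] p :=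
      continuous_parametric_intervalIntegral_of_continuous
        (by exact hPc : Continuous (Function.uncurry fun ζ ξ => MvPolynomial.eval ![h, ζ, ξ] p))
        continuous_id
    have hc2 : Continuous fun ζ : ℝ => ∫ ξ in (0:ℝ)..ζ,
        MvPolynomial.eval ![h, ζ, ξ] p * (g₁ ζ * g₂ ξ - g₁ 0 * g₂ 0) :=
      continuous_parametric_intervalIntegral_of_continuous (by exact hF2c) continuous_id
    calc (∫ ζ in (0:ℝ)..h, ∫ ξ in (0:ℝ)..ζ, MvPolynomial.eval ![h, ζ, ξ] p * g₁ ζ * g₂ ξ)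
        = ∫ ζ in (0:ℝ)..h,
            ((g₁ 0 * g₂ 0) * (∫ ξ in (0:ℝ)..ζ, MvPolynomial.eval ![h, ζ, ξ] p)
             + ∫ ξ in (0:ℝ)..ζ, MvPolynomial.eval ![h, ζ, ξ] p * (g₁ ζ * g₂ ξ - g₁ 0 * g₂ 0)) := by
          exact intervalIntegral.integral_congr fun ζ _ => hsplit ζ
      _ = (g₁ 0 * g₂ 0) * (∫ ζ in (0:ℝ)..h, ∫ ξ in (0:ℝ)..ζ, MvPolynomial.eval ![h, ζ, ξ] p)
          + ∫ ζ in (0:ℝ)..h, ∫ ξ in (0:ℝ)..ζ,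
              MvPolynomial.eval ![h, ζ, ξ] p * (g₁ ζ * g₂ ξ - g₁ 0 * g₂ 0) := by
          rw [intervalIntegral.integral_add ((hc1.intervalIntegrable _ _).const_mul _)
            (hc2.intervalIntegrable _ _), intervalIntegral.integral_const_mul]
      _ = _ := by rw [hvanish h hh0]; ring
  -- bound
  rw [houter]
  have hbound : ∀ ζ ∈ Set.uIoc (0:ℝ) h,
      ‖∫ ξ in (0:ℝ)..ζ, MvPolynomial.eval ![h, ζ, ξ] p * (g₁ ζ * g₂ ξ - g₁ 0 * g₂ 0)‖
        ≤ (K * h ^ n * (B * h)) * h := by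
    intro ζ hζ
    rw [Set.uIoc_of_le (le_of_lt hh0)] at hζ
    have hinner : ∀ ξ ∈ Set.uIoc (0:ℝ) ζ,
        ‖MvPolynomial.eval ![h, ζ, ξ] p * (g₁ ζ * g₂ ξ - g₁ 0 * g₂ 0)‖
          ≤ K * h ^ n * (B * h) := by
      intro ξ hξ
      rw [Set.uIoc_of_le (le_of_lt hζ.1)] at hξ
      rw [Real.norm_eq_abs, abs_mul]
      exact mul_le_mul (hpoly h ζ ξ (le_of_lt hξ.1) hξ.2 hζ.2)
        (hG ζ ξ (le_of_lt hξ.1) hξ.2 hζ.2) (abs_nonneg _) (by positivity)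
    calc ‖∫ ξ in (0:ℝ)..ζ, MvPolynomial.eval ![h, ζ, ξ] p * (g₁ ζ * g₂ ξ - g₁ 0 * g₂ 0)‖
        ≤ (K * h ^ n * (B * h)) * |ζ - 0| :=
          intervalIntegral.norm_integral_le_of_norm_le_const hinner
      _ ≤ (K * h ^ n * (B * h)) * h := by
          rw [sub_zero, abs_of_nonneg (le_of_lt hζ.1)]
          exact mul_le_mul_of_nonneg_left hζ.2 (by positivity)
  calc |∫ ζ in (0:ℝ)..h, ∫ ξ in (0:ℝ)..ζ,
          MvPolynomial.eval ![h, ζ, ξ] p * (g₁ ζ * g₂ ξ - g₁ 0 * g₂ 0)|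
      ≤ ((K * h ^ n * (B * h)) * h) * |h - 0| := by
        rw [← Real.norm_eq_abs]
        exact intervalIntegral.norm_integral_le_of_norm_le_const hbound
    _ = (K * B) * h ^ (n + 3) := by
        rw [sub_zero, abs_of_nonneg (le_of_lt hh0)]; ring
    _ ≤ (K * B + 1) * h ^ (n + 3) := by nlinarith [pow_nonneg (le_of_lt hh0) (n + 3)]
end

section
/- Let W : ℝ → ℝ be a smooth (infinitely differentiable) function and let W^e(s) = (W(s) + W(-s))/2 denote its even part. Let B_j denote the j-th Bernoulli polynomial. Then for every integer j ≥ 1, the quantity μ^e_{j,1}(h) = ∫_0^h h^j B_j(ζ/h) W^e(ζ - h/2) dζ satisfies μ^e_{j,1}(h) = O(h^{j+3}) as h → 0⁺ (two extra powers of h beyond the generic bound O(h^{j+1})). -/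
open Polynomial intervalIntegral

/-- The integral of the scaled Bernoulli polynomial over one period vanishes for `j ≥ 1`. -/
lemma integral_scaled_bernoulli (j : ℕ) (hj : 1 ≤ j) {h : ℝ} (hh : 0 < h) :
    ∫ ζ in (0:ℝ)..h, h ^ j * Polynomial.aeval (ζ / h) (Polynomial.bernoulli j) = 0 := by
  have hder : ∀ ζ ∈ Set.uIcc (0:ℝ) h,
      HasDerivAt (fun ζ : ℝ => h ^ j * (h / (j + 1)) * aeval (ζ / h) (Polynomial.bernoulli (j + 1)))
        (h ^ j * aeval (ζ / h) (Polynomial.bernoulli j)) ζ := by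
    intro ζ _
    have h1 : HasDerivAt (fun ζ : ℝ => ζ / h) (1 / h) ζ := by
      simpa using (hasDerivAt_id ζ).div_const h
    have h2 := ((Polynomial.bernoulli (j + 1)).hasDerivAt_aeval (ζ / h)).comp ζ h1
    have h3 := h2.const_mul (h ^ j * (h / (j + 1)))
    refine h3.congr_deriv (Eq.symm ?_)
    rw [Polynomial.derivative_bernoulli_add_one]
    push_cast
    simp only [map_mul, map_natCast, map_add, map_one, Function.comp]
    have hj1 : ((j : ℝ) + 1) ≠ 0 := by positivity
    field_simp
  have hint : IntervalIntegrable
      (fun ζ : ℝ => h ^ j * aeval (ζ / h) (Polynomial.bernoulli j)) MeasureTheory.volume 0 h := by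
    apply Continuous.intervalIntegrable
    exact continuous_const.mul ((Polynomial.continuous_aeval _).comp (continuous_id.div_const h))
  rw [intervalIntegral.integral_eq_sub_of_hasDerivAt hder hint]
  have e0 : aeval ((0:ℝ) / h) (Polynomial.bernoulli (j + 1)) = algebraMap ℚ ℝ ((Polynomial.bernoulli (j+1)).eval 0) := by
    rw [zero_div, show (0:ℝ) = algebraMap ℚ ℝ 0 by simp,
      Polynomial.aeval_algebraMap_apply_eq_algebraMap_eval]
  have e1 : aeval (h / h) (Polynomial.bernoulli (j + 1)) = algebraMap ℚ ℝ ((Polynomial.bernoulli (j+1)).eval 1) := by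
    rw [div_self hh.ne', show (1:ℝ) = algebraMap ℚ ℝ 1 by simp,
      Polynomial.aeval_algebraMap_apply_eq_algebraMap_eval]
  have heq : (Polynomial.bernoulli (j+1)).eval (1:ℚ) = (Polynomial.bernoulli (j+1)).eval 0 := by
    rw [Polynomial.bernoulli_eval_one, Polynomial.bernoulli_eval_zero,
      _root_.bernoulli_eq_bernoulli'_of_ne_one (by omega)]
  rw [e0, e1, heq]
  ring

/-- For smooth `W` with even part `W^e(s) = (W(s) + W(-s))/2` and `j ≥ 1`,
`μ^e_{j,1}(h) = ∫_0^h h^j B_j(ζ/h) W^e(ζ - h/2) dζ = O(h^{j+3})` as `h → 0⁺`. -/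
theorem mu_even_j1_bigO (W : ℝ → ℝ) (hW : ContDiff ℝ (⊤ : ℕ∞) W) (j : ℕ) (hj : 1 ≤ j) :
    ∃ C > (0:ℝ), ∃ δ > (0:ℝ), ∀ h : ℝ, 0 < h → h < δ →
      |∫ ζ in (0:ℝ)..h,
          (h ^ j * Polynomial.aeval (ζ / h) (Polynomial.bernoulli j)) *
            ((W (ζ - h / 2) + W (-(ζ - h / 2))) / 2)|
        ≤ C * h ^ (j + 3) := by
  -- the even part and its derivatives
  set V : ℝ → ℝ := fun s => (W s + W (-s)) / 2 with hV
  have hWinf : ContDiff ℝ (⊤ : ℕ∞) W := hW.of_le (by simp)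
  have hW1 : Differentiable ℝ W := hW.differentiable (by simp)
  have hWd : ContDiff ℝ (⊤ : ℕ∞) (deriv W) := (contDiff_infty_iff_deriv.mp hWinf).2
  have hW2 : Differentiable ℝ (deriv W) := hWd.differentiable (by simp)
  have hWdd : Continuous (deriv (deriv W)) := (contDiff_infty_iff_deriv.mp hWd).2.continuous
  set V' : ℝ → ℝ := fun s => (deriv W s - deriv W (-s)) / 2 with hV'
  set V'' : ℝ → ℝ := fun s => (deriv (deriv W) s + deriv (deriv W) (-s)) / 2 with hV''
  have hdV : ∀ s, HasDerivAt V (V' s) s := by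
    intro s
    have h1 : HasDerivAt (fun s : ℝ => W (-s)) (deriv W (-s) * (-1)) s :=
      ((hW1 (-s)).hasDerivAt).comp s (hasDerivAt_neg s)
    have := (((hW1 s).hasDerivAt).add h1).div_const 2
    refine this.congr_deriv (Eq.symm ?_)
    simp [hV']; ring
  have hdV' : ∀ s, HasDerivAt V' (V'' s) s := by
    intro s
    have h1 : HasDerivAt (fun s : ℝ => deriv W (-s)) (deriv (deriv W) (-s) * (-1)) s :=
      ((hW2 (-s)).hasDerivAt).comp s (hasDerivAt_neg s)
    have := (((hW2 s).hasDerivAt).sub h1).div_const 2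
    refine this.congr_deriv (Eq.symm ?_)
    simp [hV'']
  -- bound the second derivative on [-1,1]
  obtain ⟨M, hM⟩ : ∃ M : ℝ, ∀ t ∈ Set.Icc (-1:ℝ) 1, |V'' t| ≤ M := by
    obtain ⟨t₀, _, ht₀⟩ := (isCompact_Icc (a := (-1:ℝ)) (b := 1)).exists_isMaxOn
      (Set.nonempty_Icc.mpr (by norm_num))
      ((continuous_abs.comp ((hWdd.add (hWdd.comp continuous_neg)).div_const 2)).continuousOn)
    exact ⟨_, fun t ht => ht₀ ht⟩
  have hM0 : 0 ≤ M := le_trans (abs_nonneg _) (hM 0 (by norm_num))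
  -- Taylor-type bound : |V s - V 0| ≤ M * s ^ 2 for |s| ≤ 1
  have key : ∀ s : ℝ, |s| ≤ 1 → |V s - V 0| ≤ M * s ^ 2 := by
    intro s hs
    have hsub : Set.uIcc (0:ℝ) s ⊆ Set.Icc (-1) 1 := by
      intro x hx
      rcases Set.mem_uIcc.mp hx with ⟨h1, h2⟩ | ⟨h1, h2⟩ <;>
        constructor <;> [linarith [neg_abs_le s]; linarith [le_abs_self s];
          linarith [neg_abs_le s]; linarith [le_abs_self s]]
    -- first: |V' x| ≤ M * |x| on [-1,1]
    have hV'bound : ∀ x ∈ Set.Icc (-1:ℝ) 1, |V' x| ≤ M * |x| := by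
      intro x hx
      have h0 : V' 0 = 0 := by simp [hV']
      have := (convex_Icc (-1:ℝ) 1).norm_image_sub_le_of_norm_hasDerivWithin_le
        (f := V') (f' := V'') (fun y hy => (hdV' y).hasDerivWithinAt)
        (fun y hy => hM y hy) (by norm_num : (0:ℝ) ∈ Set.Icc (-1:ℝ) 1) hx
      simpa [h0, Real.norm_eq_abs] using this
    have hbd2 : ∀ x ∈ Set.uIcc (0:ℝ) s, ‖V' x‖ ≤ M * |s| := by
      intro x hx
      refine le_trans (hV'bound x (hsub hx)) (mul_le_mul_of_nonneg_left ?_ hM0)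
      rcases Set.mem_uIcc.mp hx with ⟨h1, h2⟩ | ⟨h1, h2⟩
      · rw [abs_of_nonneg h1]; exact le_trans h2 (le_abs_self s)
      · rw [abs_of_nonpos h2]
        have := neg_abs_le s; linarith
    have := (convex_uIcc (0:ℝ) s).norm_image_sub_le_of_norm_hasDerivWithin_le
      (f := V) (f' := V') (fun y hy => (hdV y).hasDerivWithinAt) hbd2
      Set.left_mem_uIcc Set.right_mem_uIcc
    calc |V s - V 0| ≤ M * |s| * ‖s - 0‖ := by simpa [Real.norm_eq_abs] using this
      _ = M * s ^ 2 := by rw [Real.norm_eq_abs, sub_zero, ← sq_abs s]; ring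
  -- bound on Bernoulli polynomial on [0,1]
  obtain ⟨MB, hMB⟩ : ∃ MB : ℝ, ∀ t ∈ Set.Icc (0:ℝ) 1, |aeval t (Polynomial.bernoulli j)| ≤ MB := by
    obtain ⟨t₀, _, ht₀⟩ := (isCompact_Icc (a := (0:ℝ)) (b := 1)).exists_isMaxOn
      (Set.nonempty_Icc.mpr (by norm_num))
      ((continuous_abs.comp (Polynomial.continuous_aeval (Polynomial.bernoulli j))).continuousOn)
    exact ⟨_, fun t ht => ht₀ ht⟩
  have hMB0 : 0 ≤ MB := le_trans (abs_nonneg _) (hMB 0 (by norm_num))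
  refine ⟨MB * M / 4 + 1, by positivity, 1, one_pos, fun h hh hh1 => ?_⟩
  -- continuity facts
  have hcB : Continuous (fun ζ : ℝ => h ^ j * aeval (ζ / h) (Polynomial.bernoulli j)) :=
    continuous_const.mul ((Polynomial.continuous_aeval _).comp (continuous_id.div_const h))
  have hcV : Continuous V := ((hW1.continuous).add (hW1.continuous.comp continuous_neg)).div_const 2
  -- split the integral
  have hsplit : (∫ ζ in (0:ℝ)..h,
      (h ^ j * aeval (ζ / h) (Polynomial.bernoulli j)) * V (ζ - h / 2))
      = ∫ ζ in (0:ℝ)..h,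
        (h ^ j * aeval (ζ / h) (Polynomial.bernoulli j)) * (V (ζ - h / 2) - V 0) := by
    have i1 : IntervalIntegrable
        (fun ζ : ℝ => (h ^ j * aeval (ζ / h) (Polynomial.bernoulli j)) * (V (ζ - h / 2) - V 0))
        MeasureTheory.volume 0 h :=
      (hcB.mul ((hcV.comp (continuous_id.sub continuous_const)).sub continuous_const)).intervalIntegrable _ _
    have i2 : IntervalIntegrable
        (fun ζ : ℝ => (h ^ j * aeval (ζ / h) (Polynomial.bernoulli j)) * V 0)
        MeasureTheory.volume 0 h := (hcB.mul continuous_const).intervalIntegrable _ _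
    have : (fun ζ : ℝ => (h ^ j * aeval (ζ / h) (Polynomial.bernoulli j)) * V (ζ - h / 2))
        = fun ζ => (h ^ j * aeval (ζ / h) (Polynomial.bernoulli j)) * (V (ζ - h / 2) - V 0)
          + (h ^ j * aeval (ζ / h) (Polynomial.bernoulli j)) * V 0 := by
      funext ζ; ring
    rw [this, intervalIntegral.integral_add i1 i2, intervalIntegral.integral_mul_const,
      integral_scaled_bernoulli j hj hh, zero_mul, add_zero]
  -- pointwise bound
  have hpt : ∀ ζ ∈ Set.uIoc (0:ℝ) h,
      ‖(h ^ j * aeval (ζ / h) (Polynomial.bernoulli j)) * (V (ζ - h / 2) - V 0)‖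
        ≤ h ^ j * MB * (M * (h / 2) ^ 2) := by
    intro ζ hζ
    rw [Set.uIoc_of_le hh.le] at hζ
    obtain ⟨hζ0, hζh⟩ := hζ
    have hmem : ζ / h ∈ Set.Icc (0:ℝ) 1 :=
      ⟨div_nonneg hζ0.le hh.le, (div_le_one hh).mpr hζh⟩
    have habs : |ζ - h / 2| ≤ h / 2 := by
      rw [abs_le]; constructor <;> linarith
    have hs1 : |ζ - h / 2| ≤ 1 := le_trans habs (by linarith)
    have hVb : |V (ζ - h / 2) - V 0| ≤ M * (h / 2) ^ 2 := by
      refine le_trans (key _ hs1) (mul_le_mul_of_nonneg_left ?_ hM0)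
      calc (ζ - h / 2) ^ 2 = |ζ - h / 2| ^ 2 := (sq_abs _).symm
        _ ≤ (h / 2) ^ 2 := by
            apply pow_le_pow_left₀ (abs_nonneg _) habs
    rw [Real.norm_eq_abs, abs_mul, abs_mul, abs_pow, abs_of_pos hh]
    exact mul_le_mul (mul_le_mul_of_nonneg_left (hMB _ hmem) (by positivity)) hVb
      (abs_nonneg _) (by positivity)
  have hbound := intervalIntegral.norm_integral_le_of_norm_le_const hpt
  rw [hsplit]
  rw [Real.norm_eq_abs] at hbound
  calc |∫ ζ in (0:ℝ)..h, (h ^ j * aeval (ζ / h) (Polynomial.bernoulli j)) * (V (ζ - h / 2) - V 0)|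
      ≤ h ^ j * MB * (M * (h / 2) ^ 2) * |h - 0| := hbound
    _ = MB * M / 4 * h ^ (j + 3) := by
        rw [sub_zero, abs_of_pos hh]; ring
    _ ≤ (MB * M / 4 + 1) * h ^ (j + 3) := by nlinarith [pow_pos hh (j + 3)]
end

section
/- Let W : ℝ → ℝ be a smooth (infinitely differentiable) function and let W^o(s) = (W(s) - W(-s))/2 denote its odd part. Let B_j denote the j-th Bernoulli polynomial. Then for all j, k ∈ ℕ, the quantity μ^o_{j,k}(h) = ∫_0^h (h^j B_j(ζ/h))^k W^o(ζ - h/2) dζ satisfies μ^o_{j,k}(h) = O(h^{jk+2}) as h → 0⁺. -/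
/-- For smooth `W` with odd part `W^o(s) = (W(s) - W(-s))/2` and all `j k`,
`μ^o_{j,k}(h) = ∫_0^h (h^j B_j(ζ/h))^k W^o(ζ - h/2) dζ = O(h^{jk+2})` as `h → 0⁺`. -/
theorem mu_odd_jk_bigO (W : ℝ → ℝ) (hW : ContDiff ℝ (⊤ : ℕ∞) W) (j k : ℕ) :
    ∃ C > (0:ℝ), ∃ δ > (0:ℝ), ∀ h : ℝ, 0 < h → h < δ →
      |∫ ζ in (0:ℝ)..h,
          (h ^ j * Polynomial.aeval (ζ / h) (Polynomial.bernoulli j)) ^ k *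
            ((W (ζ - h / 2) - W (-(ζ - h / 2))) / 2)|
        ≤ C * h ^ (j * k + 2) := by
  -- Bound for the Bernoulli polynomial on [0,1]
  obtain ⟨M0, hM0⟩ := isCompact_Icc.exists_bound_of_continuousOn
    (f := fun t : ℝ => Polynomial.aeval t (Polynomial.bernoulli j))
    (s := Set.Icc (0:ℝ) 1)
    ((Polynomial.bernoulli j).continuous_aeval.continuousOn)
  set M : ℝ := max M0 0 with hMdef
  have hM : ∀ t ∈ Set.Icc (0:ℝ) 1, |Polynomial.aeval t (Polynomial.bernoulli j)| ≤ M :=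
    fun t ht => le_trans (hM0 t ht) (le_max_left _ _)
  have hMnn : (0:ℝ) ≤ M := le_max_right _ _
  -- Bound for the derivative of W on [-1,1]
  obtain ⟨L0, hL0⟩ := isCompact_Icc.exists_bound_of_continuousOn
    (f := deriv W) (s := Set.Icc (-1:ℝ) 1)
    ((hW.continuous_deriv (by simp)).continuousOn)
  set L : ℝ := max L0 0 with hLdef
  have hL : ∀ x ∈ Set.Icc (-1:ℝ) 1, ‖deriv W x‖ ≤ L :=
    fun x hx => le_trans (hL0 x hx) (le_max_left _ _)
  have hLnn : (0:ℝ) ≤ L := le_max_right _ _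
  -- Lipschitz bound on [-1,1]
  have hlip : ∀ x ∈ Set.Icc (-1:ℝ) 1, ∀ y ∈ Set.Icc (-1:ℝ) 1,
      ‖W y - W x‖ ≤ L * ‖y - x‖ := by
    intro x hx y hy
    exact (convex_Icc (-1:ℝ) 1).norm_image_sub_le_of_norm_deriv_le
      (fun z _ => (hW.differentiable (by simp)).differentiableAt)
      hL hx hy
  refine ⟨(M + 1) ^ k * (L + 1), by positivity, 1, one_pos, fun h hh hδ => ?_⟩
  have key : ∀ ζ ∈ Set.uIoc (0:ℝ) h,
      ‖(h ^ j * Polynomial.aeval (ζ / h) (Polynomial.bernoulli j)) ^ k *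
        ((W (ζ - h / 2) - W (-(ζ - h / 2))) / 2)‖
      ≤ (M + 1) ^ k * (L + 1) * h ^ (j * k + 1) := by
    intro ζ hζ
    rw [Set.uIoc_of_le hh.le] at hζ
    obtain ⟨hζ0, hζh⟩ := hζ
    have hsh : |ζ - h / 2| ≤ h / 2 := by
      rw [abs_le]; constructor <;> linarith
    have hs1 : ζ - h / 2 ∈ Set.Icc (-1:ℝ) 1 := by
      rw [Set.mem_Icc]
      constructor <;> [linarith [abs_le.mp hsh]; linarith [abs_le.mp hsh]]
    have hs2 : -(ζ - h / 2) ∈ Set.Icc (-1:ℝ) 1 := by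
      rw [Set.mem_Icc]
      constructor <;> [linarith [abs_le.mp hsh]; linarith [abs_le.mp hsh]]
    -- bound on the odd part
    have hWo : |(W (ζ - h / 2) - W (-(ζ - h / 2))) / 2| ≤ L * h := by
      have := hlip _ hs2 _ hs1
      have h2 : ‖(ζ - h / 2) - (-(ζ - h / 2))‖ = 2 * |ζ - h / 2| := by
        rw [Real.norm_eq_abs]
        rw [show (ζ - h / 2) - (-(ζ - h / 2)) = 2 * (ζ - h / 2) by ring]
        rw [abs_mul]
        norm_num
      rw [Real.norm_eq_abs] at this
      rw [abs_div]
      have : |W (ζ - h / 2) - W (-(ζ - h / 2))| ≤ L * (2 * (h / 2)) := by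
        calc |W (ζ - h / 2) - W (-(ζ - h / 2))| ≤ L * (2 * |ζ - h / 2|) := by
              rw [← h2]; exact this
          _ ≤ L * (2 * (h / 2)) := by nlinarith
      rw [show |(2:ℝ)| = 2 by norm_num]
      nlinarith
    -- bound on the Bernoulli factor
    have hB : |Polynomial.aeval (ζ / h) (Polynomial.bernoulli j)| ≤ M := by
      apply hM
      rw [Set.mem_Icc]
      constructor
      · positivity
      · rw [div_le_one hh]; exact hζh
    have hpow : |(h ^ j * Polynomial.aeval (ζ / h) (Polynomial.bernoulli j)) ^ k|
        ≤ h ^ (j * k) * M ^ k := by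
      rw [abs_pow, abs_mul, abs_pow, abs_of_pos hh]
      rw [mul_pow, ← pow_mul]
      gcongr
    rw [Real.norm_eq_abs, abs_mul]
    calc |(h ^ j * Polynomial.aeval (ζ / h) (Polynomial.bernoulli j)) ^ k| *
          |(W (ζ - h / 2) - W (-(ζ - h / 2))) / 2|
        ≤ (h ^ (j * k) * M ^ k) * (L * h) := by
          apply mul_le_mul hpow hWo (abs_nonneg _)
          positivity
      _ ≤ (M + 1) ^ k * (L + 1) * h ^ (j * k + 1) := by
          rw [pow_succ]
          have h1 : M ^ k ≤ (M + 1) ^ k := by gcongr; linarith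
          have h2 : L ≤ L + 1 := by linarith
          have hml : M ^ k * L ≤ (M + 1) ^ k * (L + 1) :=
            mul_le_mul h1 h2 hLnn (by positivity)
          have hp : (0:ℝ) ≤ h ^ (j * k) * h := by positivity
          calc h ^ (j * k) * M ^ k * (L * h) = M ^ k * L * (h ^ (j * k) * h) := by ring
            _ ≤ (M + 1) ^ k * (L + 1) * (h ^ (j * k) * h) :=
                mul_le_mul_of_nonneg_right hml hp
  have := intervalIntegral.norm_integral_le_of_norm_le_const key
  rw [Real.norm_eq_abs] at this
  calc |∫ ζ in (0:ℝ)..h,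
        (h ^ j * Polynomial.aeval (ζ / h) (Polynomial.bernoulli j)) ^ k *
          ((W (ζ - h / 2) - W (-(ζ - h / 2))) / 2)|
      ≤ (M + 1) ^ k * (L + 1) * h ^ (j * k + 1) * |h - 0| := this
    _ = (M + 1) ^ k * (L + 1) * h ^ (j * k + 2) := by
        rw [sub_zero, abs_of_pos hh, pow_succ (h) (j*k+1)]
        ring
end

section
/- Let p(h,ζ,ξ) be a polynomial in three real variables all of whose monomials have total degree exactly n, and suppose ∫_0^h ∫_0^ζ p(h,ζ,ξ) dξ dζ = 0 for all h > 0. Let g₁, g₂ : ℝ → ℝ be smooth functions, set F(s,t) = g₁(s) g₂(t), and let F^e(s,t) = (F(s,t) + F(-s,-t))/2 be the even part of F under simultaneous sign reversal. Then Λ^e(h) = ∫_0^h ∫_0^ζ p(h,ζ,ξ) F^e(ζ - h/2, ξ - h/2) dξ dζ satisfies Λ^e(h) = O(h^{n+4}) as h → 0⁺. -/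
open MeasureTheory intervalIntegral

set_option maxHeartbeats 1000000

private lemma taylor_quadratic (g : ℝ → ℝ) (hg : ContDiff ℝ ((⊤ : ℕ∞) : WithTop ℕ∞) g) :
    ∃ K > (0:ℝ), ∀ s : ℝ, |s| ≤ 1 → |g s - g 0 - deriv g 0 * s| ≤ K * s ^ 2 := by
  have hgd : Differentiable ℝ g := hg.differentiable (by simp)
  have hg' : ContDiff ℝ ((⊤ : ℕ∞) : WithTop ℕ∞) (deriv g) := (contDiff_infty_iff_deriv.mp hg).2
  have hg'd : Differentiable ℝ (deriv g) := hg'.differentiable (by simp)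
  have hg'' : Continuous (deriv (deriv g)) := (contDiff_infty_iff_deriv.mp hg').2.continuous
  obtain ⟨L, hL⟩ := (isCompact_Icc (a := (-1:ℝ)) (b := 1)).exists_bound_of_continuousOn
      hg''.continuousOn
  set K : ℝ := max L 0 + 1 with hKdef
  have hK : (0:ℝ) < K := by positivity
  have hLip : ∀ x ∈ Set.Icc (-1:ℝ) 1, |deriv g x - deriv g 0| ≤ K * |x| := by
    intro x hx
    have := Convex.norm_image_sub_le_of_norm_deriv_le (f := deriv g) (s := Set.Icc (-1:ℝ) 1)
        (fun y _ => hg'd y) (fun y hy => by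
          have := hL y hy
          simp only [Real.norm_eq_abs] at this ⊢
          calc |deriv (deriv g) y| ≤ L := this
            _ ≤ K := by simp [hKdef]; linarith [le_max_left L 0]) (convex_Icc _ _)
        (show (0:ℝ) ∈ Set.Icc (-1:ℝ) 1 by norm_num) hx
    simpa [Real.norm_eq_abs] using this
  refine ⟨K, hK, ?_⟩
  intro s hs
  set r : ℝ → ℝ := fun x => g x - g 0 - deriv g 0 * x with hrdef
  have hder : ∀ x : ℝ, HasDerivAt r (deriv g x - deriv g 0) x := by
    intro x
    have h1 : HasDerivAt (fun y => g y - g 0) (deriv g x) x := (hgd x).hasDerivAt.sub_const _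
    have h2 : HasDerivAt (fun y => deriv g 0 * y) (deriv g 0) x := by
      simpa using (hasDerivAt_id x).const_mul (deriv g 0)
    exact h1.sub h2
  have hsub : Set.Icc (-|s|) |s| ⊆ Set.Icc (-1:ℝ) 1 := by
    apply Set.Icc_subset_Icc <;> linarith
  have hmain := Convex.norm_image_sub_le_of_norm_deriv_le (f := r)
      (s := Set.Icc (-|s|) |s|) (fun y _ => (hder y).differentiableAt)
      (fun y hy => by
        rw [(hder y).deriv]
        have h1 := hLip y (hsub hy)
        have h2 : |y| ≤ |s| := abs_le.mpr ⟨(Set.mem_Icc.mp hy).1, (Set.mem_Icc.mp hy).2⟩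
        calc ‖deriv g y - deriv g 0‖ = |deriv g y - deriv g 0| := rfl
          _ ≤ K * |y| := h1
          _ ≤ K * |s| := by nlinarith)
      (convex_Icc _ _)
      (Set.mem_Icc.mpr ⟨neg_nonpos.mpr (abs_nonneg s), abs_nonneg s⟩)
      (Set.mem_Icc.mpr ⟨neg_abs_le s, le_abs_self s⟩)
  have hr0 : r 0 = 0 := by simp [hrdef]
  rw [hr0, sub_zero, sub_zero] at hmain
  calc |g s - g 0 - deriv g 0 * s| = ‖r s‖ := rfl
    _ ≤ K * |s| * ‖s‖ := hmain
    _ = K * s ^ 2 := by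
        rw [Real.norm_eq_abs, mul_assoc, show |s| * |s| = s ^ 2 by rw [← sq_abs s]; ring]

private lemma abs_add₆ (x1 x2 x3 x4 x5 x6 : ℝ) :
    |x1+x2+x3+x4+x5+x6| ≤ |x1|+|x2|+|x3|+|x4|+|x5|+|x6| :=
  (abs_add_le _ _).trans (add_le_add ((abs_add_le _ _).trans (add_le_add ((abs_add_le _ _).trans
    (add_le_add ((abs_add_le _ _).trans (add_le_add (abs_add_le _ _) le_rfl)) le_rfl)) le_rfl)) le_rfl)

private lemma evenBound (g₁ g₂ : ℝ → ℝ) (hg₁ : ContDiff ℝ (⊤ : ℕ∞) g₁) (hg₂ : ContDiff ℝ (⊤ : ℕ∞) g₂) :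
    ∃ K > (0:ℝ), ∀ s t : ℝ, |s| ≤ 1 → |t| ≤ 1 →
      |(g₁ s * g₂ t + g₁ (-s) * g₂ (-t)) / 2 - g₁ 0 * g₂ 0| ≤ K * (s ^ 2 + t ^ 2) := by
  obtain ⟨K₁, hK₁, hb₁⟩ := taylor_quadratic g₁ (hg₁.of_le (by simp))
  obtain ⟨K₂, hK₂, hb₂⟩ := taylor_quadratic g₂ (hg₂.of_le (by simp))
  set a := g₁ 0 with ha
  set b := deriv g₁ 0 with hbb
  set c := g₂ 0 with hc
  set d := deriv g₂ 0 with hd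
  refine ⟨(|b| * |d|) + |c| * K₁ + |a| * K₂ + |b| * K₂ + |d| * K₁ + K₁ * K₂, by positivity, ?_⟩
  intro s t hs ht
  have hs2 : s ^ 2 ≤ 1 := by nlinarith [sq_abs s, abs_nonneg s]
  have ht2 : t ^ 2 ≤ 1 := by nlinarith [sq_abs t, abs_nonneg t]
  set u := g₁ s - a - b * s with hu
  set u' := g₁ (-s) - a - b * (-s) with hu'
  set v := g₂ t - c - d * t with hv
  set v' := g₂ (-t) - c - d * (-t) with hv'
  have hus : |u| ≤ K₁ * s ^ 2 := hb₁ s hs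
  have hu's : |u'| ≤ K₁ * s ^ 2 := by
    have := hb₁ (-s) (by rwa [abs_neg]); rwa [neg_sq] at this
  have hvs : |v| ≤ K₂ * t ^ 2 := hb₂ t ht
  have hv's : |v'| ≤ K₂ * t ^ 2 := by
    have := hb₂ (-t) (by rwa [abs_neg]); rwa [neg_sq] at this
  have hE : (g₁ s * g₂ t + g₁ (-s) * g₂ (-t)) / 2 - a * c
      = b*d*(s*t) + c*(u+u')/2 + a*(v+v')/2 + b*s*(v - v')/2 + d*t*(u - u')/2
        + (u*v + u'*v')/2 := by
    simp only [hu, hu', hv, hv']; ring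
  rw [hE]
  refine (abs_add₆ _ _ _ _ _ _).trans ?_
  have hT1 : |b*d*(s*t)| ≤ (|b| * |d|) * (s^2+t^2) := by
    rw [abs_mul, abs_mul]
    have hst : |s*t| ≤ s^2 + t^2 := by
      rw [abs_mul]
      nlinarith [sq_nonneg (|s| - |t|), sq_abs s, sq_abs t, abs_nonneg s, abs_nonneg t]
    calc |b| * |d| * |s*t| ≤ |b| * |d| *(s^2+t^2) := by gcongr
      _ = (|b| * |d|)*(s^2+t^2) := by ring
  have hT2 : |c*(u+u')/2| ≤ (|c| *K₁) * (s^2+t^2) := by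
    have h2 : |u + u'| ≤ 2*(K₁*s^2) := (abs_add_le _ _).trans (by linarith)
    calc |c*(u+u')/2| = |c| * |u+u'| / 2 := by rw [abs_div, abs_mul, abs_two]
      _ ≤ |c| * (2*(K₁*s^2)) / 2 := by gcongr
      _ ≤ (|c| *K₁) * (s^2+t^2) := by
          nlinarith [mul_nonneg (mul_nonneg (abs_nonneg c) hK₁.le) (sq_nonneg t)]
  have hT3 : |a*(v+v')/2| ≤ (|a| *K₂) * (s^2+t^2) := by
    have h2 : |v + v'| ≤ 2*(K₂*t^2) := (abs_add_le _ _).trans (by linarith)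
    calc |a*(v+v')/2| = |a| * |v+v'| / 2 := by rw [abs_div, abs_mul, abs_two]
      _ ≤ |a| * (2*(K₂*t^2)) / 2 := by gcongr
      _ ≤ (|a| *K₂) * (s^2+t^2) := by
          nlinarith [mul_nonneg (mul_nonneg (abs_nonneg a) hK₂.le) (sq_nonneg s)]
  have hT4 : |b*s*(v - v')/2| ≤ (|b| *K₂) * (s^2+t^2) := by
    have h2 : |v - v'| ≤ 2*(K₂*t^2) := (abs_sub _ _).trans (by linarith)
    calc |b*s*(v-v')/2| = |b| * |s| * |v-v'| / 2 := by
          rw [abs_div, abs_mul, abs_mul, abs_two]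
      _ ≤ |b| * 1 * (2*(K₂*t^2)) / 2 := by gcongr
      _ ≤ (|b| *K₂) * (s^2+t^2) := by
          nlinarith [mul_nonneg (mul_nonneg (abs_nonneg b) hK₂.le) (sq_nonneg s)]
  have hT5 : |d*t*(u - u')/2| ≤ (|d| *K₁) * (s^2+t^2) := by
    have h2 : |u - u'| ≤ 2*(K₁*s^2) := (abs_sub _ _).trans (by linarith)
    calc |d*t*(u-u')/2| = |d| * |t| * |u-u'| / 2 := by
          rw [abs_div, abs_mul, abs_mul, abs_two]
      _ ≤ |d| * 1 * (2*(K₁*s^2)) / 2 := by gcongr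
      _ ≤ (|d| *K₁) * (s^2+t^2) := by
          nlinarith [mul_nonneg (mul_nonneg (abs_nonneg d) hK₁.le) (sq_nonneg t)]
  have hT6 : |(u*v + u'*v')/2| ≤ (K₁*K₂) * (s^2+t^2) := by
    have h6a : |u*v| ≤ (K₁*s^2)*(K₂*t^2) := by
      rw [abs_mul]; exact mul_le_mul hus hvs (abs_nonneg _) (by positivity)
    have h6b : |u'*v'| ≤ (K₁*s^2)*(K₂*t^2) := by
      rw [abs_mul]; exact mul_le_mul hu's hv's (abs_nonneg _) (by positivity)
    calc |(u*v + u'*v')/2| ≤ (|u*v| + |u'*v'|)/2 := by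
          rw [abs_div, abs_two]; gcongr; exact abs_add_le _ _
      _ ≤ ((K₁*s^2)*(K₂*t^2) + (K₁*s^2)*(K₂*t^2))/2 := by gcongr
      _ = (K₁*s^2)*(K₂*t^2) := by ring
      _ ≤ (K₁*K₂) * (s^2+t^2) := by
          nlinarith [mul_nonneg (mul_nonneg (mul_nonneg hK₁.le hK₂.le) (sq_nonneg s)) (sq_nonneg t),
            mul_nonneg (mul_nonneg hK₁.le hK₂.le) (sq_nonneg s),
            mul_nonneg (mul_nonneg hK₁.le hK₂.le) (sq_nonneg t)]
  nlinarith [hT1, hT2, hT3, hT4, hT5, hT6]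

private lemma polyBound (n : ℕ) (p : MvPolynomial (Fin 3) ℝ) (hp : p.IsHomogeneous n) :
    ∃ Cp > (0:ℝ), ∀ (h : ℝ) (v : Fin 3 → ℝ), 0 ≤ h → (∀ i, |v i| ≤ h) →
      |MvPolynomial.eval v p| ≤ Cp * h ^ n := by
  refine ⟨(∑ m ∈ p.support, |MvPolynomial.coeff m p|) + 1, by positivity, ?_⟩
  intro h v hh hv
  rw [MvPolynomial.eval_eq']
  calc |∑ m ∈ p.support, MvPolynomial.coeff m p * ∏ i, v i ^ m i|
      ≤ ∑ m ∈ p.support, |MvPolynomial.coeff m p * ∏ i, v i ^ m i| :=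
        Finset.abs_sum_le_sum_abs _ _
    _ ≤ ∑ m ∈ p.support, |MvPolynomial.coeff m p| * h ^ n := by
        refine Finset.sum_le_sum fun m hm => ?_
        rw [abs_mul]
        refine mul_le_mul_of_nonneg_left ?_ (abs_nonneg _)
        have h1 : Finsupp.weight 1 m = n := hp (MvPolynomial.mem_support_iff.mp hm)
        replace h1 : m.degree = n := by rw [Finsupp.degree_eq_weight_one]; exact h1
        have h2 : m.degree = ∑ i, m i :=
          Finset.sum_subset (Finset.subset_univ _)
            (fun i _ hi => Finsupp.notMem_support_iff.mp hi)
        have hdeg : ∑ i, m i = n := by rw [← h2, h1]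
        calc |∏ i, v i ^ m i| = ∏ i, |v i| ^ m i := by
              rw [Finset.abs_prod]
              exact Finset.prod_congr rfl fun i _ => abs_pow _ _
          _ ≤ ∏ i, h ^ m i :=
              Finset.prod_le_prod (fun i _ => by positivity)
                (fun i _ => pow_le_pow_left₀ (abs_nonneg _) (hv i) _)
          _ = h ^ (∑ i, m i) := Finset.prod_pow_eq_pow_sum _ _ _
          _ = h ^ n := by rw [hdeg]
    _ = (∑ m ∈ p.support, |MvPolynomial.coeff m p|) * h ^ n := by rw [← Finset.sum_mul]
    _ ≤ ((∑ m ∈ p.support, |MvPolynomial.coeff m p|) + 1) * h ^ n := by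
        have h1 : (0:ℝ) ≤ h ^ n := pow_nonneg hh n
        nlinarith

/-- For `p` homogeneous of degree `n` with vanishing triangle integral,
smooth `g₁ g₂`, `F(s,t) = g₁(s)g₂(t)` and `F^e(s,t) = (F(s,t) + F(-s,-t))/2`, the quantity
`Λ^e(h) = ∫_0^h ∫_0^ζ p(h,ζ,ξ) F^e(ζ-h/2, ξ-h/2) dξ dζ = O(h^{n+4})` as `h → 0⁺`. -/
theorem lambda_even_bigO (n : ℕ) (p : MvPolynomial (Fin 3) ℝ)
    (hp : p.IsHomogeneous n)
    (hvanish : ∀ h : ℝ, 0 < h →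
      (∫ ζ in (0:ℝ)..h, ∫ ξ in (0:ℝ)..ζ, MvPolynomial.eval ![h, ζ, ξ] p) = 0)
    (g₁ g₂ : ℝ → ℝ) (hg₁ : ContDiff ℝ (⊤ : ℕ∞) g₁) (hg₂ : ContDiff ℝ (⊤ : ℕ∞) g₂) :
    ∃ C > (0:ℝ), ∃ δ > (0:ℝ), ∀ h : ℝ, 0 < h → h < δ →
      |∫ ζ in (0:ℝ)..h, ∫ ξ in (0:ℝ)..ζ,
          MvPolynomial.eval ![h, ζ, ξ] p *
            ((g₁ (ζ - h / 2) * g₂ (ξ - h / 2) +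
              g₁ (-(ζ - h / 2)) * g₂ (-(ξ - h / 2))) / 2)|
        ≤ C * h ^ (n + 4) := by
  obtain ⟨K, hK, hKb⟩ := evenBound g₁ g₂ hg₁ hg₂
  obtain ⟨Cp, hCp, hCpb⟩ := polyBound n p hp
  refine ⟨Cp * K + 1, by positivity, 1, one_pos, ?_⟩
  intro h hh hh1
  set c : ℝ := g₁ 0 * g₂ 0 with hcdef
  -- notation for the even factor
  set G : ℝ → ℝ → ℝ := fun ζ ξ =>
    (g₁ (ζ - h / 2) * g₂ (ξ - h / 2) + g₁ (-(ζ - h / 2)) * g₂ (-(ξ - h / 2))) / 2 with hGdef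
  -- continuity facts
  have hvec : ∀ (x : ℝ × ℝ), True := fun _ => trivial
  have hcontvec : Continuous fun x : ℝ × ℝ => (![h, x.1, x.2] : Fin 3 → ℝ) := by
    refine continuous_pi fun i => ?_
    fin_cases i <;> simp <;> fun_prop
  have hcontp : Continuous fun x : ℝ × ℝ => MvPolynomial.eval ![h, x.1, x.2] p :=
    (MvPolynomial.continuous_eval p).comp hcontvec
  have hc₁ : Continuous g₁ := hg₁.continuous
  have hc₂ : Continuous g₂ := hg₂.continuous
  have hcontG : Continuous fun x : ℝ × ℝ => G x.1 x.2 := by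
    simp only [hGdef]
    exact (((hc₁.comp (continuous_fst.sub continuous_const)).mul
        (hc₂.comp (continuous_snd.sub continuous_const))).add
      ((hc₁.comp (continuous_fst.sub continuous_const).neg).mul
        (hc₂.comp (continuous_snd.sub continuous_const).neg))).div_const 2
  have hcontB : Continuous fun x : ℝ × ℝ =>
      MvPolynomial.eval ![h, x.1, x.2] p * (G x.1 x.2 - c) :=
    hcontp.mul (hcontG.sub continuous_const)
  -- fix ζ slices are continuous
  have hvec2 : ∀ ζ : ℝ, Continuous fun ξ : ℝ => (![h, ζ, ξ] : Fin 3 → ℝ) := by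
    intro ζ
    refine continuous_pi fun i => ?_
    fin_cases i <;> simp <;> fun_prop
  have hslicep : ∀ ζ : ℝ, Continuous fun ξ => MvPolynomial.eval ![h, ζ, ξ] p := fun ζ =>
    (MvPolynomial.continuous_eval p).comp (hvec2 ζ)
  have hsliceG : ∀ ζ : ℝ, Continuous fun ξ => G ζ ξ := by
    intro ζ
    simp only [hGdef]
    exact (((continuous_const.mul
        (hc₂.comp (continuous_id.sub continuous_const))).add
      (continuous_const.mul
        (hc₂.comp (continuous_id.sub continuous_const).neg)))).div_const 2
  have hsliceB : ∀ ζ : ℝ, Continuous fun ξ => MvPolynomial.eval ![h, ζ, ξ] p * (G ζ ξ - c) :=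
    fun ζ => (hslicep ζ).mul ((hsliceG ζ).sub continuous_const)
  set B : ℝ → ℝ := fun ζ => ∫ ξ in (0:ℝ)..ζ, MvPolynomial.eval ![h, ζ, ξ] p * (G ζ ξ - c)
    with hBdef
  set I : ℝ → ℝ := fun ζ => ∫ ξ in (0:ℝ)..ζ, MvPolynomial.eval ![h, ζ, ξ] p with hIdef
  have hBcont : Continuous B := by
    rw [hBdef]
    exact intervalIntegral.continuous_parametric_intervalIntegral_of_continuous
      (f := fun ζ ξ => MvPolynomial.eval ![h, ζ, ξ] p * (G ζ ξ - c)) hcontB continuous_id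
  have hIcont : Continuous I := by
    rw [hIdef]
    exact intervalIntegral.continuous_parametric_intervalIntegral_of_continuous
      (f := fun ζ ξ => MvPolynomial.eval ![h, ζ, ξ] p) hcontp continuous_id
  have step1 : ∀ ζ : ℝ,
      (∫ ξ in (0:ℝ)..ζ, MvPolynomial.eval ![h, ζ, ξ] p * G ζ ξ) = B ζ + c * I ζ := by
    intro ζ
    have e1 : (∫ ξ in (0:ℝ)..ζ, MvPolynomial.eval ![h, ζ, ξ] p * G ζ ξ)
        = ∫ ξ in (0:ℝ)..ζ,
            (MvPolynomial.eval ![h, ζ, ξ] p * (G ζ ξ - c)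
              + c * MvPolynomial.eval ![h, ζ, ξ] p) := by
      apply intervalIntegral.integral_congr
      intro ξ _
      ring
    rw [e1, intervalIntegral.integral_add (((hsliceB ζ)).intervalIntegrable _ _)
      (((hslicep ζ).intervalIntegrable _ _).const_mul c),
      intervalIntegral.integral_const_mul]
  have step2 : (∫ ζ in (0:ℝ)..h, ∫ ξ in (0:ℝ)..ζ,
        MvPolynomial.eval ![h, ζ, ξ] p * G ζ ξ) = (∫ ζ in (0:ℝ)..h, B ζ) := by
    have e2 : (∫ ζ in (0:ℝ)..h, ∫ ξ in (0:ℝ)..ζ,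
        MvPolynomial.eval ![h, ζ, ξ] p * G ζ ξ) = ∫ ζ in (0:ℝ)..h, (B ζ + c * I ζ) :=
      intervalIntegral.integral_congr fun ζ _ => step1 ζ
    rw [e2, intervalIntegral.integral_add (hBcont.intervalIntegrable _ _)
      ((hIcont.intervalIntegrable _ _).const_mul c),
      intervalIntegral.integral_const_mul]
    have := hvanish h hh
    rw [hIdef]
    rw [show (∫ ζ in (0:ℝ)..h, ∫ ξ in (0:ℝ)..ζ, MvPolynomial.eval ![h, ζ, ξ] p) = 0 from this]
    ring
  -- pointwise bound
  have hM : ∀ ζ ∈ Set.uIoc (0:ℝ) h, ∀ ξ ∈ Set.uIoc (0:ℝ) ζ,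
      ‖MvPolynomial.eval ![h, ζ, ξ] p * (G ζ ξ - c)‖ ≤ Cp * K * h ^ (n + 2) := by
    intro ζ hζ ξ hξ
    rw [Set.uIoc_of_le hh.le] at hζ
    rw [Set.uIoc_of_le (le_of_lt hζ.1)] at hξ
    have hζ1 : 0 < ζ := hζ.1
    have hζ2 : ζ ≤ h := hζ.2
    have hξ1 : 0 < ξ := hξ.1
    have hξ2 : ξ ≤ ζ := hξ.2
    have hpb : |MvPolynomial.eval ![h, ζ, ξ] p| ≤ Cp * h ^ n := by
      refine hCpb h ![h, ζ, ξ] hh.le ?_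
      intro i
      fin_cases i <;> simp <;> rw [abs_of_pos (by linarith)] <;> linarith
    have hsb : |ζ - h/2| ≤ 1 := by rw [abs_le]; constructor <;> linarith
    have htb : |ξ - h/2| ≤ 1 := by rw [abs_le]; constructor <;> linarith
    have hGb : |G ζ ξ - c| ≤ K * ((ζ - h/2)^2 + (ξ - h/2)^2) := hKb _ _ hsb htb
    have hsq : (ζ - h/2)^2 + (ξ - h/2)^2 ≤ h^2 := by nlinarith
    calc ‖MvPolynomial.eval ![h, ζ, ξ] p * (G ζ ξ - c)‖
        = |MvPolynomial.eval ![h, ζ, ξ] p| * |G ζ ξ - c| := by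
          rw [Real.norm_eq_abs, abs_mul]
      _ ≤ (Cp * h ^ n) * (K * ((ζ - h/2)^2 + (ξ - h/2)^2)) :=
          mul_le_mul hpb hGb (abs_nonneg _) (by positivity)
      _ ≤ (Cp * h ^ n) * (K * h^2) := by
          refine mul_le_mul_of_nonneg_left ?_ (by positivity)
          exact mul_le_mul_of_nonneg_left hsq hK.le
      _ = Cp * K * h ^ (n + 2) := by rw [pow_add]; ring
  have hBb : ∀ ζ ∈ Set.uIoc (0:ℝ) h, ‖B ζ‖ ≤ Cp * K * h ^ (n + 2) * h := by
    intro ζ hζ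
    have h1 : ‖B ζ‖ ≤ Cp * K * h ^ (n + 2) * |ζ - 0| :=
      intervalIntegral.norm_integral_le_of_norm_le_const (hM ζ hζ)
    have hζ' := hζ
    rw [Set.uIoc_of_le hh.le] at hζ'
    have : |ζ - 0| ≤ h := by
      rw [sub_zero, abs_of_pos hζ'.1]; exact hζ'.2
    calc ‖B ζ‖ ≤ Cp * K * h ^ (n + 2) * |ζ - 0| := h1
      _ ≤ Cp * K * h ^ (n + 2) * h := by
          refine mul_le_mul_of_nonneg_left this (by positivity)
  have hfinal : ‖∫ ζ in (0:ℝ)..h, B ζ‖ ≤ Cp * K * h ^ (n + 2) * h * |h - 0| :=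
    intervalIntegral.norm_integral_le_of_norm_le_const hBb
  have hGoal : (∫ ζ in (0:ℝ)..h, ∫ ξ in (0:ℝ)..ζ,
      MvPolynomial.eval ![h, ζ, ξ] p *
        ((g₁ (ζ - h / 2) * g₂ (ξ - h / 2) +
          g₁ (-(ζ - h / 2)) * g₂ (-(ξ - h / 2))) / 2)) = ∫ ζ in (0:ℝ)..h, B ζ := step2
  rw [hGoal, ← Real.norm_eq_abs]
  calc ‖∫ ζ in (0:ℝ)..h, B ζ‖ ≤ Cp * K * h ^ (n + 2) * h * |h - 0| := hfinal
    _ = Cp * K * h ^ (n + 4) := by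
        rw [sub_zero, abs_of_pos hh, show n + 4 = n + 2 + 1 + 1 by ring, pow_succ, pow_succ]
        ring
    _ ≤ (Cp * K + 1) * h ^ (n + 4) := by
        have : (0:ℝ) ≤ h ^ (n + 4) := by positivity
        nlinarith
end

section
/- Let r(h,ζ,ξ) be a polynomial in three real variables all of whose monomials have total degree exactly n. Let g₁, g₂ : ℝ → ℝ be smooth functions, set F(s,t) = g₁(s) g₂(t), and let F^o(s,t) = (F(s,t) - F(-s,-t))/2 be the odd part of F under simultaneous sign reversal. Then Λ^o(h) = ∫_0^h ∫_0^ζ r(h,ζ,ξ) F^o(ζ - h/2, ξ - h/2) dξ dζ satisfies Λ^o(h) = O(h^{n+3}) as h → 0⁺, whether or not the triangle integral of r vanishes. -/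
/-- For `r` homogeneous of degree `n`, smooth `g₁ g₂`,
`F(s,t) = g₁(s)g₂(t)` and `F^o(s,t) = (F(s,t) - F(-s,-t))/2`, the quantity
`Λ^o(h) = ∫_0^h ∫_0^ζ r(h,ζ,ξ) F^o(ζ-h/2, ξ-h/2) dξ dζ = O(h^{n+3})` as `h → 0⁺`,
with no vanishing assumption on the triangle integral of `r`. -/
theorem lambda_odd_bigO (n : ℕ) (r : MvPolynomial (Fin 3) ℝ)
    (hr : r.IsHomogeneous n)
    (g₁ g₂ : ℝ → ℝ) (hg₁ : ContDiff ℝ (⊤ : ℕ∞) g₁) (hg₂ : ContDiff ℝ (⊤ : ℕ∞) g₂) :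
    ∃ C > (0:ℝ), ∃ δ > (0:ℝ), ∀ h : ℝ, 0 < h → h < δ →
      |∫ ζ in (0:ℝ)..h, ∫ ξ in (0:ℝ)..ζ,
          MvPolynomial.eval ![h, ζ, ξ] r *
            ((g₁ (ζ - h / 2) * g₂ (ξ - h / 2) -
              g₁ (-(ζ - h / 2)) * g₂ (-(ξ - h / 2))) / 2)|
        ≤ C * h ^ (n + 3) := by
  -- Lipschitz data near 0
  obtain ⟨K₁, t₁, ht₁, hl₁⟩ :=
    (hg₁.contDiffAt (x := (0:ℝ)) |>.of_le (by simp)).exists_lipschitzOnWith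
  obtain ⟨K₂, t₂, ht₂, hl₂⟩ :=
    (hg₂.contDiffAt (x := (0:ℝ)) |>.of_le (by simp)).exists_lipschitzOnWith
  obtain ⟨ε₁, hε₁, hball₁⟩ := Metric.mem_nhds_iff.mp ht₁
  obtain ⟨ε₂, hε₂, hball₂⟩ := Metric.mem_nhds_iff.mp ht₂
  -- sup bounds on [-1,1]
  obtain ⟨M₁, hM₁⟩ := (isCompact_Icc (a := (-1:ℝ)) (b := 1)).exists_bound_of_continuousOn
    hg₁.continuous.continuousOn
  obtain ⟨M₂, hM₂⟩ := (isCompact_Icc (a := (-1:ℝ)) (b := 1)).exists_bound_of_continuousOn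
    hg₂.continuous.continuousOn
  have hM₁0 : 0 ≤ M₁ := le_trans (norm_nonneg _) (hM₁ 0 (by norm_num))
  have hM₂0 : 0 ≤ M₂ := le_trans (norm_nonneg _) (hM₂ 0 (by norm_num))
  set A : ℝ := ∑ d ∈ r.support, |r.coeff d| with hA
  have hA0 : 0 ≤ A := Finset.sum_nonneg fun _ _ => abs_nonneg _
  set L : ℝ := ((K₁ : ℝ) * M₂ + M₁ * (K₂ : ℝ)) / 2 with hL
  have hL0 : 0 ≤ L := by positivity
  refine ⟨A * L + 1, by positivity, min (min ε₁ ε₂) 1, by positivity, ?_⟩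
  intro h h0 hδ
  have hε₁' : h < ε₁ := lt_of_lt_of_le hδ (le_trans (min_le_left _ _) (min_le_left _ _))
  have hε₂' : h < ε₂ := lt_of_lt_of_le hδ (le_trans (min_le_left _ _) (min_le_right _ _))
  have h1 : h < 1 := lt_of_lt_of_le hδ (min_le_right _ _)
  -- pointwise bound on the integrand
  have key : ∀ ζ ∈ Set.Ioc (0:ℝ) h, ∀ ξ ∈ Set.Ioc (0:ℝ) ζ,
      |MvPolynomial.eval ![h, ζ, ξ] r *
        ((g₁ (ζ - h / 2) * g₂ (ξ - h / 2) -
          g₁ (-(ζ - h / 2)) * g₂ (-(ξ - h / 2))) / 2)| ≤ (A * h ^ n) * (L * h) := by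
    intro ζ hζ ξ hξ
    have hζh : ζ ≤ h := hζ.2
    have hξh : ξ ≤ h := le_trans hξ.2 hζh
    -- bound on the polynomial
    have hpoly : |MvPolynomial.eval ![h, ζ, ξ] r| ≤ A * h ^ n := by
      rw [MvPolynomial.eval_eq]
      refine le_trans (Finset.abs_sum_le_sum_abs _ _) ?_
      rw [hA, Finset.sum_mul]
      refine Finset.sum_le_sum fun d hd => ?_
      rw [abs_mul]
      refine mul_le_mul_of_nonneg_left ?_ (abs_nonneg _)
      have hXi : ∀ i : Fin 3, |(![h, ζ, ξ] : Fin 3 → ℝ) i| ≤ h := by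
        intro i
        fin_cases i
        · simpa [abs_of_pos h0] using le_refl h
        · simpa [abs_of_pos hζ.1] using hζh
        · simpa [abs_of_pos hξ.1] using hξh
      calc |∏ i ∈ d.support, (![h, ζ, ξ] : Fin 3 → ℝ) i ^ d i|
          = ∏ i ∈ d.support, |(![h, ζ, ξ] : Fin 3 → ℝ) i| ^ d i := by
            rw [Finset.abs_prod]; exact Finset.prod_congr rfl fun i _ => abs_pow _ _
        _ ≤ ∏ i ∈ d.support, h ^ d i :=
            Finset.prod_le_prod (fun i _ => by positivity)
              (fun i _ => pow_le_pow_left₀ (abs_nonneg _) (hXi i) _)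
        _ = h ^ (∑ i ∈ d.support, d i) := by rw [Finset.prod_pow_eq_pow_sum]
        _ = h ^ n := by
            congr 1
            have hne := MvPolynomial.mem_support_iff.mp hd
            have := hr hne
            rw [Finsupp.weight_apply, Finsupp.sum] at this
            simpa [Finsupp.degree] using this
    -- bound on the odd part
    set s := ζ - h / 2 with hs
    set t := ξ - h / 2 with ht
    have hsabs : |s| ≤ h / 2 := by
      rw [abs_le]; constructor <;> [linarith [hζ.1]; linarith]
    have htabs : |t| ≤ h / 2 := by
      rw [abs_le]; constructor <;> [linarith [hξ.1]; linarith]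
    have hs1 : s ∈ Set.Icc (-1:ℝ) 1 := by
      rw [Set.mem_Icc, ← abs_le]; linarith
    have ht1 : t ∈ Set.Icc (-1:ℝ) 1 := by
      rw [Set.mem_Icc, ← abs_le]; linarith
    have hns1 : -s ∈ Set.Icc (-1:ℝ) 1 := by
      rw [Set.mem_Icc, ← abs_le, abs_neg]; linarith
    have hnt1 : -t ∈ Set.Icc (-1:ℝ) 1 := by
      rw [Set.mem_Icc, ← abs_le, abs_neg]; linarith
    have hst₁ : s ∈ t₁ := hball₁ (by simp [Real.dist_eq]; linarith)
    have hnst₁ : -s ∈ t₁ := hball₁ (by simp [Real.dist_eq, abs_neg]; linarith)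
    have hst₂ : t ∈ t₂ := hball₂ (by simp [Real.dist_eq]; linarith)
    have hnst₂ : -t ∈ t₂ := hball₂ (by simp [Real.dist_eq, abs_neg]; linarith)
    have hg1d : |g₁ s - g₁ (-s)| ≤ (K₁ : ℝ) * h := by
      have := hl₁.dist_le_mul s hst₁ (-s) hnst₁
      rw [Real.dist_eq, Real.dist_eq] at this
      refine le_trans this ?_
      have : |s - -s| ≤ h := by
        rw [sub_neg_eq_add, ← two_mul, abs_mul]
        simp only [abs_two]
        linarith
      nlinarith [K₁.coe_nonneg]
    have hg2d : |g₂ t - g₂ (-t)| ≤ (K₂ : ℝ) * h := by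
      have := hl₂.dist_le_mul t hst₂ (-t) hnst₂
      rw [Real.dist_eq, Real.dist_eq] at this
      refine le_trans this ?_
      have : |t - -t| ≤ h := by
        rw [sub_neg_eq_add, ← two_mul, abs_mul]
        simp only [abs_two]
        linarith
      nlinarith [K₂.coe_nonneg]
    have hbM2 : |g₂ t| ≤ M₂ := hM₂ t ht1
    have hbM1 : |g₁ (-s)| ≤ M₁ := hM₁ (-s) hns1
    have hodd : |(g₁ s * g₂ t - g₁ (-s) * g₂ (-t)) / 2| ≤ L * h := by
      have hdecomp : g₁ s * g₂ t - g₁ (-s) * g₂ (-t)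
          = (g₁ s - g₁ (-s)) * g₂ t + g₁ (-s) * (g₂ t - g₂ (-t)) := by ring
      rw [abs_div, abs_two, hdecomp, hL]
      have h₁ : |(g₁ s - g₁ (-s)) * g₂ t| ≤ ((K₁ : ℝ) * h) * M₂ := by
        rw [abs_mul]
        exact mul_le_mul hg1d hbM2 (abs_nonneg _) (by positivity)
      have h₂ : |g₁ (-s) * (g₂ t - g₂ (-t))| ≤ M₁ * ((K₂ : ℝ) * h) := by
        rw [abs_mul]
        exact mul_le_mul hbM1 hg2d (abs_nonneg _) hM₁0
      have := le_trans (abs_add_le _ _) (add_le_add h₁ h₂)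
      rw [div_le_iff₀ (by norm_num : (0:ℝ) < 2)]
      nlinarith
    rw [abs_mul]
    exact mul_le_mul hpoly hodd (abs_nonneg _) (by positivity)
  -- integrate the bound
  have hinner : ∀ ζ ∈ Set.uIoc (0:ℝ) h,
      ‖∫ ξ in (0:ℝ)..ζ,
          MvPolynomial.eval ![h, ζ, ξ] r *
            ((g₁ (ζ - h / 2) * g₂ (ξ - h / 2) -
              g₁ (-(ζ - h / 2)) * g₂ (-(ξ - h / 2))) / 2)‖
        ≤ (A * h ^ n) * (L * h) * h := by
    intro ζ hζ
    rw [Set.uIoc_of_le h0.le] at hζ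
    have hb := intervalIntegral.norm_integral_le_of_norm_le_const
      (C := (A * h ^ n) * (L * h))
      (f := fun ξ => MvPolynomial.eval ![h, ζ, ξ] r *
            ((g₁ (ζ - h / 2) * g₂ (ξ - h / 2) -
              g₁ (-(ζ - h / 2)) * g₂ (-(ξ - h / 2))) / 2))
      (fun ξ hξ => by
        rw [Set.uIoc_of_le hζ.1.le] at hξ
        rw [Real.norm_eq_abs]
        exact key ζ hζ ξ hξ)
    refine le_trans hb ?_
    have : |ζ - 0| ≤ h := by rw [sub_zero, abs_of_pos hζ.1]; exact hζ.2
    have hC0 : 0 ≤ (A * h ^ n) * (L * h) := by positivity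
    nlinarith
  have houter := intervalIntegral.norm_integral_le_of_norm_le_const hinner
  rw [Real.norm_eq_abs] at houter
  refine le_trans houter ?_
  rw [sub_zero, abs_of_pos h0]
  have : A * h ^ n * (L * h) * h * h = (A * L) * h ^ (n + 3) := by ring
  rw [this]
  have : 0 ≤ h ^ (n + 3) := by positivity
  nlinarith
end

section
/- For k ∈ ℕ and a smooth function f : ℝ → ℝ, let ⟨f⟩_k be the symmetrized differential operator acting on smooth u : ℝ → ℝ by ⟨f⟩_k u = (1/2)(f · u^{(k)} + (f·u)^{(k)}). Then for all smooth f, g, u : ℝ → ℝ, the commutator identity [⟨f⟩₂, ⟨g⟩₁] u = ⟨2f·g' - f'·g⟩₂ u - (1/2) ⟨2f'·g'' + f·g'''⟩₀ u holds pointwise. -/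
/-- The symmetrized differential operator `⟨f⟩_k u = (1/2)(f·u^{(k)} + (f·u)^{(k)})`. -/
noncomputable def ang (f : ℝ → ℝ) (k : ℕ) (u : ℝ → ℝ) : ℝ → ℝ :=
  fun x => (1 / 2) * (f x * iteratedDeriv k u x + iteratedDeriv k (fun y => f y * u y) x)

private lemma Dsmooth {f : ℝ → ℝ} (h : ContDiff ℝ (⊤ : ℕ∞) f) : ContDiff ℝ (⊤ : ℕ∞) (deriv f) :=
  (contDiff_succ_iff_deriv.mp (by simpa using h)).2.2

private lemma i2 (φ : ℝ → ℝ) : iteratedDeriv 2 φ = deriv (deriv φ) := by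
  rw [show (2:ℕ) = 1 + 1 from rfl, iteratedDeriv_succ, iteratedDeriv_one]

private lemma i3 (φ : ℝ → ℝ) : iteratedDeriv 3 φ = deriv (deriv (deriv φ)) := by
  rw [show (3:ℕ) = 2 + 1 from rfl, iteratedDeriv_succ, i2]

private lemma ang0_eq (c u : ℝ → ℝ) (x : ℝ) : ang c 0 u x = c x * u x := by
  simp [ang, iteratedDeriv_zero]; ring

private lemma ang1_eq (g u : ℝ → ℝ) (hg : ContDiff ℝ (⊤ : ℕ∞) g) (hu : ContDiff ℝ (⊤ : ℕ∞) u) :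
    ang g 1 u = fun y => g y * deriv u y + (1/2) * (deriv g y * u y) := by
  funext y
  have := deriv_fun_mul (hg.differentiable (by simp) y) (hu.differentiable (by simp) y)
  simp only [ang, iteratedDeriv_one, this]
  ring

private lemma ang2_eq (f u : ℝ → ℝ) (hf : ContDiff ℝ (⊤ : ℕ∞) f) (hu : ContDiff ℝ (⊤ : ℕ∞) u) :
    ang f 2 u = fun y => f y * deriv (deriv u) y + deriv f y * deriv u y
      + (1/2) * (deriv (deriv f) y * u y) := by
  have df : Differentiable ℝ f := hf.differentiable (by simp)
  have du : Differentiable ℝ u := hu.differentiable (by simp)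
  have df1 : Differentiable ℝ (deriv f) := (Dsmooth hf).differentiable (by simp)
  have du1 : Differentiable ℝ (deriv u) := (Dsmooth hu).differentiable (by simp)
  have e1 : deriv (fun y => f y * u y) = fun y => deriv f y * u y + f y * deriv u y :=
    funext fun y => deriv_fun_mul (df y) (du y)
  funext y
  simp only [ang, i2, e1]
  rw [deriv_fun_add (by fun_prop) (by fun_prop), deriv_fun_mul (df1 y) (du y),
    deriv_fun_mul (df y) (du1 y)]
  ring

/-- `[⟨f⟩₂, ⟨g⟩₁] u = ⟨2f·g' - f'·g⟩₂ u - (1/2)⟨2f'·g'' + f·g'''⟩₀ u`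
pointwise, for smooth `f g u`. -/
theorem comm_ang2_ang1 (f g u : ℝ → ℝ)
    (hf : ContDiff ℝ (⊤ : ℕ∞) f) (hg : ContDiff ℝ (⊤ : ℕ∞) g) (hu : ContDiff ℝ (⊤ : ℕ∞) u) (x : ℝ) :
    ang f 2 (ang g 1 u) x - ang g 1 (ang f 2 u) x =
      ang (fun y => 2 * f y * deriv g y - deriv f y * g y) 2 u x -
        (1 / 2) * ang (fun y => 2 * deriv f y * iteratedDeriv 2 g y +
          f y * iteratedDeriv 3 g y) 0 u x := by
  have hf1 : ContDiff ℝ (⊤ : ℕ∞) (deriv f) := Dsmooth hf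
  have hf2 : ContDiff ℝ (⊤ : ℕ∞) (deriv (deriv f)) := Dsmooth hf1
  have hf3 : ContDiff ℝ (⊤ : ℕ∞) (deriv (deriv (deriv f))) := Dsmooth hf2
  have hg1 : ContDiff ℝ (⊤ : ℕ∞) (deriv g) := Dsmooth hg
  have hg2 : ContDiff ℝ (⊤ : ℕ∞) (deriv (deriv g)) := Dsmooth hg1
  have hg3 : ContDiff ℝ (⊤ : ℕ∞) (deriv (deriv (deriv g))) := Dsmooth hg2
  have hu1 : ContDiff ℝ (⊤ : ℕ∞) (deriv u) := Dsmooth hu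
  have hu2 : ContDiff ℝ (⊤ : ℕ∞) (deriv (deriv u)) := Dsmooth hu1
  have hu3 : ContDiff ℝ (⊤ : ℕ∞) (deriv (deriv (deriv u))) := Dsmooth hu2
  have df : Differentiable ℝ f := hf.differentiable (by simp)
  have df1 : Differentiable ℝ (deriv f) := hf1.differentiable (by simp)
  have df2 : Differentiable ℝ (deriv (deriv f)) := hf2.differentiable (by simp)
  have df3 : Differentiable ℝ (deriv (deriv (deriv f))) := hf3.differentiable (by simp)
  have dg : Differentiable ℝ g := hg.differentiable (by simp)
  have dg1 : Differentiable ℝ (deriv g) := hg1.differentiable (by simp)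
  have dg2 : Differentiable ℝ (deriv (deriv g)) := hg2.differentiable (by simp)
  have dg3 : Differentiable ℝ (deriv (deriv (deriv g))) := hg3.differentiable (by simp)
  have du : Differentiable ℝ u := hu.differentiable (by simp)
  have du1 : Differentiable ℝ (deriv u) := hu1.differentiable (by simp)
  have du2 : Differentiable ℝ (deriv (deriv u)) := hu2.differentiable (by simp)
  have du3 : Differentiable ℝ (deriv (deriv (deriv u))) := hu3.differentiable (by simp)
  -- A := ang g 1 u
  have hA : ContDiff ℝ (⊤ : ℕ∞) (fun y => g y * deriv u y + (1/2) * (deriv g y * u y)) := by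
    fun_prop
  have dA1 : deriv (fun y => g y * deriv u y + (1/2) * (deriv g y * u y)) =
      fun y => (deriv g y * deriv u y + g y * deriv (deriv u) y)
        + (1/2) * (deriv (deriv g) y * u y + deriv g y * deriv u y) := by
    funext y
    rw [deriv_fun_add (by fun_prop) (by fun_prop), deriv_fun_mul (dg y) (du1 y),
      deriv_const_mul _ (by fun_prop), deriv_fun_mul (dg1 y) (du y)]
  have dA2 : deriv (fun y => (deriv g y * deriv u y + g y * deriv (deriv u) y)
        + (1/2) * (deriv (deriv g) y * u y + deriv g y * deriv u y)) =
      fun y => ((deriv (deriv g) y * deriv u y + deriv g y * deriv (deriv u) y)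
          + (deriv g y * deriv (deriv u) y + g y * deriv (deriv (deriv u)) y))
        + (1/2) * ((deriv (deriv (deriv g)) y * u y + deriv (deriv g) y * deriv u y)
          + (deriv (deriv g) y * deriv u y + deriv g y * deriv (deriv u) y)) := by
    funext y
    rw [deriv_fun_add (by fun_prop) (by fun_prop), deriv_fun_add (by fun_prop) (by fun_prop),
      deriv_fun_mul (dg1 y) (du1 y), deriv_fun_mul (dg y) (du2 y),
      deriv_const_mul _ (by fun_prop), deriv_fun_add (by fun_prop) (by fun_prop),
      deriv_fun_mul (dg2 y) (du y), deriv_fun_mul (dg1 y) (du1 y)]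
  -- B := ang f 2 u
  have hB : ContDiff ℝ (⊤ : ℕ∞) (fun y => f y * deriv (deriv u) y + deriv f y * deriv u y
      + (1/2) * (deriv (deriv f) y * u y)) := by fun_prop
  have dB1 : deriv (fun y => f y * deriv (deriv u) y + deriv f y * deriv u y
        + (1/2) * (deriv (deriv f) y * u y)) =
      fun y => ((deriv f y * deriv (deriv u) y + f y * deriv (deriv (deriv u)) y)
          + (deriv (deriv f) y * deriv u y + deriv f y * deriv (deriv u) y))
        + (1/2) * (deriv (deriv (deriv f)) y * u y + deriv (deriv f) y * deriv u y) := by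
    funext y
    rw [deriv_fun_add (by fun_prop) (by fun_prop), deriv_fun_add (by fun_prop) (by fun_prop),
      deriv_fun_mul (df y) (du2 y), deriv_fun_mul (df1 y) (du1 y),
      deriv_const_mul _ (by fun_prop), deriv_fun_mul (df2 y) (du y)]
  -- h := 2 f g' - f' g
  have hh : ContDiff ℝ (⊤ : ℕ∞) (fun y => 2 * f y * deriv g y - deriv f y * g y) := by fun_prop
  have dh1 : deriv (fun y => 2 * f y * deriv g y - deriv f y * g y) =
      fun y => (2 * deriv f y * deriv g y + 2 * f y * deriv (deriv g) y)
        - (deriv (deriv f) y * g y + deriv f y * deriv g y) := by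
    funext y
    rw [deriv_fun_sub (by fun_prop) (by fun_prop), deriv_fun_mul (by fun_prop) (dg1 y),
      deriv_fun_mul (df1 y) (dg y), deriv_const_mul _ (df y)]
  have dh2 : deriv (fun y => (2 * deriv f y * deriv g y + 2 * f y * deriv (deriv g) y)
        - (deriv (deriv f) y * g y + deriv f y * deriv g y)) =
      fun y => ((2 * deriv (deriv f) y * deriv g y + 2 * deriv f y * deriv (deriv g) y)
          + (2 * deriv f y * deriv (deriv g) y + 2 * f y * deriv (deriv (deriv g)) y))
        - ((deriv (deriv (deriv f)) y * g y + deriv (deriv f) y * deriv g y)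
          + (deriv (deriv f) y * deriv g y + deriv f y * deriv (deriv g) y)) := by
    funext y
    rw [deriv_fun_sub (by fun_prop) (by fun_prop), deriv_fun_add (by fun_prop) (by fun_prop),
      deriv_fun_add (by fun_prop) (by fun_prop),
      deriv_fun_mul (by fun_prop) (dg1 y), deriv_const_mul _ (df1 y),
      deriv_fun_mul (by fun_prop) (dg2 y), deriv_const_mul _ (df y),
      deriv_fun_mul (df2 y) (dg y), deriv_fun_mul (df1 y) (dg1 y)]
  rw [ang1_eq g u hg hu, ang2_eq f _ hf hA, ang2_eq f u hf hu, ang1_eq g _ hg hB,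
    ang2_eq _ u hh hu, ang0_eq, dA1, dA2, dB1, dh1, dh2, i2, i3]
  ring
end

section
/- For k ∈ ℕ and a smooth function f : ℝ → ℝ, let ⟨f⟩_k be the symmetrized differential operator acting on smooth u : ℝ → ℝ by ⟨f⟩_k u = (1/2)(f · u^{(k)} + (f·u)^{(k)}). Then for all smooth f, g, u : ℝ → ℝ, the commutator identity [⟨f⟩₂, ⟨g⟩₂] u = 2 ⟨f·g' - f'·g⟩₃ u + ⟨2f''·g' - 2f'·g'' + f'''·g - f·g'''⟩₁ u holds pointwise. -/
@[fun_prop] theorem cd_deriv (f : ℝ → ℝ) (hf : ContDiff ℝ (⊤ : ℕ∞) f) : ContDiff ℝ (⊤ : ℕ∞) (deriv f) := by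
  have : ContDiff ℝ (⊤ : ℕ∞) f := hf
  exact (contDiff_infty_iff_deriv.mp this).2

theorem D_mul (a b : ℝ → ℝ) (ha : ContDiff ℝ (⊤ : ℕ∞) a) (hb : ContDiff ℝ (⊤ : ℕ∞) b) :
    deriv (fun y => a y * b y) = fun y => deriv a y * b y + a y * deriv b y :=
  funext fun x => deriv_mul (ha.differentiable (by simp) x) (hb.differentiable (by simp) x)

theorem D_add (a b : ℝ → ℝ) (ha : ContDiff ℝ (⊤ : ℕ∞) a) (hb : ContDiff ℝ (⊤ : ℕ∞) b) :
    deriv (fun y => a y + b y) = fun y => deriv a y + deriv b y :=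
  funext fun x => deriv_add (ha.differentiable (by simp) x) (hb.differentiable (by simp) x)

theorem D_sub (a b : ℝ → ℝ) (ha : ContDiff ℝ (⊤ : ℕ∞) a) (hb : ContDiff ℝ (⊤ : ℕ∞) b) :
    deriv (fun y => a y - b y) = fun y => deriv a y - deriv b y :=
  funext fun x => deriv_sub (ha.differentiable (by simp) x) (hb.differentiable (by simp) x)

theorem id2 (f : ℝ → ℝ) : iteratedDeriv 2 f = deriv (deriv f) := by
  rw [show (2:ℕ) = 1+1 from rfl, iteratedDeriv_succ, iteratedDeriv_one]

theorem id3 (f : ℝ → ℝ) : iteratedDeriv 3 f = deriv (deriv (deriv f)) := by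
  rw [show (3:ℕ) = 2+1 from rfl, iteratedDeriv_succ, id2]

/-- `[⟨f⟩₂, ⟨g⟩₂] u = 2⟨f·g' - f'·g⟩₃ u + ⟨2f''·g' - 2f'·g'' + f'''·g - f·g'''⟩₁ u`
pointwise, for smooth `f g u`. -/
theorem comm_ang2_ang2 (f g u : ℝ → ℝ)
    (hf : ContDiff ℝ (⊤ : ℕ∞) f) (hg : ContDiff ℝ (⊤ : ℕ∞) g) (hu : ContDiff ℝ (⊤ : ℕ∞) u) (x : ℝ) :
    ang f 2 (ang g 2 u) x - ang g 2 (ang f 2 u) x =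
      2 * ang (fun y => f y * deriv g y - deriv f y * g y) 3 u x +
        ang (fun y => 2 * iteratedDeriv 2 f y * deriv g y -
          2 * deriv f y * iteratedDeriv 2 g y +
          iteratedDeriv 3 f y * g y - f y * iteratedDeriv 3 g y) 1 u x := by
  have ang_eq : ∀ (a : ℝ → ℝ) (k : ℕ) (v : ℝ → ℝ), ang a k v =
      fun x => (1 / 2) * (a x * iteratedDeriv k v x + iteratedDeriv k (fun y => a y * v y) x) :=
    fun _ _ _ => rfl
  simp only [ang_eq, iteratedDeriv_one, id2, id3]
  simp (disch := fun_prop) only [D_mul, D_add, D_sub, deriv_const_mul_field', deriv_const']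
  ring
end

section
/- For k ∈ ℕ and a smooth function f : ℝ → ℝ, let ⟨f⟩_k be the symmetrized differential operator acting on smooth u : ℝ → ℝ by ⟨f⟩_k u = (1/2)(f · u^{(k)} + (f·u)^{(k)}). Then for all smooth f, g, u : ℝ → ℝ, the commutator identity [⟨f⟩₃, ⟨g⟩₀] u = 3 ⟨f·g'⟩₂ u - (1/2) ⟨3f'·g'' + f·g'''⟩₀ u holds pointwise. -/
open scoped ContDiff

private lemma smooth_deriv {f : ℝ → ℝ} (hf : ContDiff ℝ ∞ f) : ContDiff ℝ ∞ (deriv f) :=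
  (contDiff_infty_iff_deriv.mp hf).2

private lemma D1 (p q : ℝ → ℝ) (hp : ContDiff ℝ ∞ p) (hq : ContDiff ℝ ∞ q) (x : ℝ) :
    deriv (fun y => p y * q y) x = deriv p x * q x + p x * deriv q x :=
  deriv_mul (hp.differentiable (by norm_num) x) (hq.differentiable (by norm_num) x)

private lemma D1' (p q : ℝ → ℝ) (hp : ContDiff ℝ ∞ p) (hq : ContDiff ℝ ∞ q) :
    deriv (fun y => p y * q y) = fun y => deriv p y * q y + p y * deriv q y :=
  funext (D1 p q hp hq)

private lemma D2_s17 (p q : ℝ → ℝ) (hp : ContDiff ℝ ∞ p) (hq : ContDiff ℝ ∞ q) (x : ℝ) :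
    iteratedDeriv 2 (fun y => p y * q y) x =
      iteratedDeriv 2 p x * q x + 2 * deriv p x * deriv q x + p x * iteratedDeriv 2 q x := by
  have hp' := smooth_deriv hp
  have hq' := smooth_deriv hq
  have key : iteratedDeriv 2 (fun y => p y * q y) = deriv (deriv (fun y => p y * q y)) := by
    rw [show (2:ℕ) = 1+1 from rfl, iteratedDeriv_succ, iteratedDeriv_one]
  have e2p : iteratedDeriv 2 p = deriv (deriv p) := by
    rw [show (2:ℕ) = 1+1 from rfl, iteratedDeriv_succ, iteratedDeriv_one]
  have e2q : iteratedDeriv 2 q = deriv (deriv q) := by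
    rw [show (2:ℕ) = 1+1 from rfl, iteratedDeriv_succ, iteratedDeriv_one]
  rw [key, e2p, e2q, D1' p q hp hq]
  have e1 : DifferentiableAt ℝ (fun y => deriv p y * q y) x :=
    ((hp'.differentiable (by norm_num) x).mul (hq.differentiable (by norm_num) x))
  have e2 : DifferentiableAt ℝ (fun y => p y * deriv q y) x :=
    ((hp.differentiable (by norm_num) x).mul (hq'.differentiable (by norm_num) x))
  rw [deriv_fun_add e1 e2, D1 _ _ hp' hq, D1 _ _ hp hq']
  ring

private lemma D2' (p q : ℝ → ℝ) (hp : ContDiff ℝ ∞ p) (hq : ContDiff ℝ ∞ q) :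
    iteratedDeriv 2 (fun y => p y * q y) =
      fun y => iteratedDeriv 2 p y * q y + 2 * deriv p y * deriv q y + p y * iteratedDeriv 2 q y :=
  funext (D2_s17 p q hp hq)

private lemma D3 (p q : ℝ → ℝ) (hp : ContDiff ℝ ∞ p) (hq : ContDiff ℝ ∞ q) (x : ℝ) :
    iteratedDeriv 3 (fun y => p y * q y) x =
      iteratedDeriv 3 p x * q x + 3 * iteratedDeriv 2 p x * deriv q x +
        3 * deriv p x * iteratedDeriv 2 q x + p x * iteratedDeriv 3 q x := by
  have hp' := smooth_deriv hp
  have hq' := smooth_deriv hq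
  have hp'' := smooth_deriv hp'
  have hq'' := smooth_deriv hq'
  have e2p : iteratedDeriv 2 p = deriv (deriv p) := by
    rw [show (2:ℕ) = 1+1 from rfl, iteratedDeriv_succ, iteratedDeriv_one]
  have e2q : iteratedDeriv 2 q = deriv (deriv q) := by
    rw [show (2:ℕ) = 1+1 from rfl, iteratedDeriv_succ, iteratedDeriv_one]
  have e3p : iteratedDeriv 3 p = deriv (deriv (deriv p)) := by
    rw [show (3:ℕ) = 2+1 from rfl, iteratedDeriv_succ, e2p]
  have e3q : iteratedDeriv 3 q = deriv (deriv (deriv q)) := by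
    rw [show (3:ℕ) = 2+1 from rfl, iteratedDeriv_succ, e2q]
  have key : iteratedDeriv 3 (fun y => p y * q y)
      = deriv (iteratedDeriv 2 (fun y => p y * q y)) := by
    rw [show (3:ℕ) = 2+1 from rfl, iteratedDeriv_succ]
  rw [key, e3p, e3q, e2p, e2q, D2' p q hp hq]
  have e1 : DifferentiableAt ℝ (fun y => iteratedDeriv 2 p y * q y) x := by
    rw [e2p]; exact (hp''.differentiable (by norm_num) x).mul (hq.differentiable (by norm_num) x)
  have e2 : DifferentiableAt ℝ (fun y => 2 * deriv p y * deriv q y) x := by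
    have h := ((hp'.differentiable (by norm_num) x).mul (hq'.differentiable (by norm_num) x)).const_mul (2:ℝ)
    simpa [mul_assoc] using h
  have e3 : DifferentiableAt ℝ (fun y => p y * iteratedDeriv 2 q y) x := by
    rw [e2q]; exact (hp.differentiable (by norm_num) x).mul (hq''.differentiable (by norm_num) x)
  rw [deriv_fun_add (e1.fun_add e2) e3, deriv_fun_add e1 e2]
  have r1 : deriv (fun y => iteratedDeriv 2 p y * q y) x =
      deriv (deriv (deriv p)) x * q x + deriv (deriv p) x * deriv q x := by
    simp only [e2p]; exact D1 _ _ hp'' hq x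
  have r2 : deriv (fun y => 2 * deriv p y * deriv q y) x =
      2 * (deriv (deriv p) x * deriv q x + deriv p x * deriv (deriv q) x) := by
    have h : (fun y => 2 * deriv p y * deriv q y) = fun y => 2 * (deriv p y * deriv q y) := by
      funext y; ring
    rw [h, deriv_const_mul 2 ((hp'.differentiable (by norm_num) x).fun_mul (hq'.differentiable (by norm_num) x)),
      D1 _ _ hp' hq' x]
  have r3 : deriv (fun y => p y * iteratedDeriv 2 q y) x =
      deriv p x * deriv (deriv q) x + p x * deriv (deriv (deriv q)) x := by
    simp only [e2q]; exact D1 _ _ hp hq'' x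
  rw [r1, r2, r3]
  ring

/-- `[⟨f⟩₃, ⟨g⟩₀] u = 3⟨f·g'⟩₂ u - (1/2)⟨3f'·g'' + f·g'''⟩₀ u`
pointwise, for smooth `f g u`. -/
theorem comm_ang3_ang0 (f g u : ℝ → ℝ)
    (hf : ContDiff ℝ (⊤ : ℕ∞) f) (hg : ContDiff ℝ (⊤ : ℕ∞) g) (hu : ContDiff ℝ (⊤ : ℕ∞) u) (x : ℝ) :
    ang f 3 (ang g 0 u) x - ang g 0 (ang f 3 u) x =
      3 * ang (fun y => f y * deriv g y) 2 u x -
        (1 / 2) * ang (fun y => 3 * deriv f y * iteratedDeriv 2 g y +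
          f y * iteratedDeriv 3 g y) 0 u x := by
  have hf : ContDiff ℝ ∞ f := hf.of_le (by simp)
  have hg : ContDiff ℝ ∞ g := hg.of_le (by simp)
  have hu : ContDiff ℝ ∞ u := hu.of_le (by simp)
  have hg' := smooth_deriv hg
  have hgu : ContDiff ℝ ∞ (fun y => g y * u y) := hg.mul hu
  have hfg' : ContDiff ℝ ∞ (fun y => f y * deriv g y) := hf.mul hg'
  have hA : ang g 0 u = fun y => g y * u y := by
    funext y; simp [ang, iteratedDeriv_zero]; ring
  rw [hA]
  simp only [ang, iteratedDeriv_zero]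
  rw [D3 f (fun y => g y * u y) hf hgu x,
      D3 f u hf hu x,
      D2_s17 (fun y => f y * deriv g y) u hfg' hu x,
      D3 g u hg hu x, D2_s17 g u hg hu x,
      D1 g u hg hu x,
      D2_s17 f (deriv g) hf hg' x,
      D1 f (deriv g) hf hg' x]
  simp only [show (3:ℕ) = 2+1 from rfl, show (2:ℕ) = 1+1 from rfl,
    iteratedDeriv_succ, iteratedDeriv_one, iteratedDeriv_zero]
  ring
end

section
/- For k ∈ ℕ and a smooth function f : ℝ → ℝ, let ⟨f⟩_k be the symmetrized differential operator acting on smooth u : ℝ → ℝ by ⟨f⟩_k u = (1/2)(f · u^{(k)} + (f·u)^{(k)}), and let D² denote the second-derivative operator u ↦ u'' (which equals ⟨1⟩₂). Then for every smooth f : ℝ → ℝ the following two nested commutator identities hold pointwise when applied to any smooth u : ℝ → ℝ: (i) [[⟨f⟩₀, D²], D²] u = 4 ⟨f''⟩₂ u - ⟨f''''⟩₀ u, and (ii) [[⟨f⟩₀, D²], ⟨f⟩₀] u = -2 ⟨(f')²⟩₀ u. -/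
open scoped ContDiff


/-- The second-derivative operator `D² u = u''` (which equals `⟨1⟩₂`). -/
noncomputable def D2 (u : ℝ → ℝ) : ℝ → ℝ := iteratedDeriv 2 u

/-- The commutator `[A,B] = A∘B - B∘A` of operators on functions `ℝ → ℝ`. -/
def opComm (A B : (ℝ → ℝ) → (ℝ → ℝ)) : (ℝ → ℝ) → (ℝ → ℝ) :=
  fun u => fun x => A (B u) x - B (A u) x

private lemma oneLeInf : (∞ : WithTop ℕ∞) ≠ 0 := by simp

private lemma sd {g : ℝ → ℝ} (hg : ContDiff ℝ ∞ g) : ContDiff ℝ ∞ (deriv g) :=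
  (contDiff_infty_iff_deriv.mp hg).2

private lemma dmul {g h : ℝ → ℝ} (hg : ContDiff ℝ ∞ g) (hh : ContDiff ℝ ∞ h) :
    deriv (fun y => g y * h y) = fun y => deriv g y * h y + g y * deriv h y := by
  funext y
  exact deriv_mul (hg.differentiable oneLeInf y) (hh.differentiable oneLeInf y)

private lemma dadd {g h : ℝ → ℝ} (hg : ContDiff ℝ ∞ g) (hh : ContDiff ℝ ∞ h) :
    deriv (fun y => g y + h y) = fun y => deriv g y + deriv h y := by
  funext y
  exact deriv_add (hg.differentiable oneLeInf y) (hh.differentiable oneLeInf y)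

private lemma dneg {g : ℝ → ℝ} :
    deriv (fun y => -(g y)) = fun y => -(deriv g y) := by
  funext y; exact deriv.neg

private lemma dcmul {g : ℝ → ℝ} (c : ℝ) :
    deriv (fun y => c * g y) = fun y => c * deriv g y := by
  funext y; exact deriv_const_mul_field c

private lemma d2_mul {g h : ℝ → ℝ} (hg : ContDiff ℝ ∞ g) (hh : ContDiff ℝ ∞ h) :
    deriv (deriv (fun y => g y * h y)) =
      fun y => deriv (deriv g) y * h y + 2 * (deriv g y * deriv h y)
        + g y * deriv (deriv h) y := by
  rw [dmul hg hh]
  rw [dadd ((sd hg).mul hh) (hg.mul (sd hh))]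
  simp only [dmul (sd hg) hh, dmul hg (sd hh)]
  funext y; ring

private lemma d2_add {g h : ℝ → ℝ} (hg : ContDiff ℝ ∞ g) (hh : ContDiff ℝ ∞ h) :
    deriv (deriv (fun y => g y + h y)) =
      fun y => deriv (deriv g) y + deriv (deriv h) y := by
  rw [dadd hg hh, dadd (sd hg) (sd hh)]

private lemma d2_neg {g : ℝ → ℝ} :
    deriv (deriv (fun y => -(g y))) = fun y => -(deriv (deriv g) y) := by
  rw [dneg, dneg]

private lemma d2_cmul {g : ℝ → ℝ} (c : ℝ) :
    deriv (deriv (fun y => c * g y)) = fun y => c * deriv (deriv g) y := by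
  rw [dcmul, dcmul]

private lemma hd2 (w : ℝ → ℝ) : D2 w = deriv (deriv w) := by
  simp [D2, iteratedDeriv_succ, iteratedDeriv_zero]

private lemma commC {f v : ℝ → ℝ} (hf : ContDiff ℝ ∞ f) (hv : ContDiff ℝ ∞ v) :
    opComm (ang f 0) D2 v =
      fun x => -(deriv (deriv f) x * v x) + (-2 : ℝ) * (deriv f x * deriv v x) := by
  have h0 : ∀ w : ℝ → ℝ, ang f 0 w = fun y => f y * w y := by
    intro w; funext y; simp [ang]; ring
  funext x
  simp only [opComm, h0, hd2]
  simp only [d2_mul hf hv]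
  ring

/-- For smooth `f u`, pointwise:
(i) `[[⟨f⟩₀, D²], D²] u = 4⟨f''⟩₂ u - ⟨f''''⟩₀ u`, and
(ii) `[[⟨f⟩₀, D²], ⟨f⟩₀] u = -2⟨(f')²⟩₀ u`. -/
theorem nested_comm_ang0_D2 (f u : ℝ → ℝ)
    (hf : ContDiff ℝ (⊤ : ℕ∞) f) (hu : ContDiff ℝ (⊤ : ℕ∞) u) (x : ℝ) :
    opComm (opComm (ang f 0) D2) D2 u x =
        4 * ang (iteratedDeriv 2 f) 2 u x - ang (iteratedDeriv 4 f) 0 u x ∧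
    opComm (opComm (ang f 0) D2) (ang f 0) u x =
        -2 * ang (fun y => (deriv f y) ^ 2) 0 u x := by
  have hf : ContDiff ℝ ∞ f := hf.of_le (by simp)
  have hu : ContDiff ℝ ∞ u := hu.of_le (by simp)
  have hf1 : ContDiff ℝ ∞ (deriv f) := sd hf
  have hf2 : ContDiff ℝ ∞ (deriv (deriv f)) := sd hf1
  have hu1 : ContDiff ℝ ∞ (deriv u) := sd hu
  have hD2u : ContDiff ℝ ∞ (D2 u) := by rw [hd2]; exact sd (sd hu)
  have e2 := commC hf hu
  have hi2 : ∀ w : ℝ → ℝ, iteratedDeriv 2 w = deriv (deriv w) := by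
    intro w; simp [iteratedDeriv_succ, iteratedDeriv_zero]
  have hi4 : iteratedDeriv 4 f = deriv (deriv (deriv (deriv f))) := by
    simp [iteratedDeriv_succ, iteratedDeriv_zero]
  constructor
  · have e1 := commC hf hD2u
    show (opComm (ang f 0) D2) (D2 u) x - D2 ((opComm (ang f 0) D2) u) x = _
    rw [e1, e2]
    simp only [hd2]
    simp only [d2_add ((hf2.mul hu).neg) (contDiff_const.mul (hf1.mul hu1)),
      d2_neg, d2_cmul, d2_mul hf2 hu, d2_mul hf1 hu1]
    simp only [ang, hi2, hi4, iteratedDeriv_zero]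
    simp only [d2_mul hf2 hu]
    ring
  · have hfu : ContDiff ℝ ∞ (fun y => f y * u y) := hf.mul hu
    have e3 := commC hf hfu
    have egg : ang f 0 u = fun y => f y * u y := by
      funext y; simp [ang]; ring
    show (opComm (ang f 0) D2) (ang f 0 u) x - ang f 0 ((opComm (ang f 0) D2) u) x = _
    rw [egg, e3, e2]
    simp only [dmul hf hu]
    simp only [ang, iteratedDeriv_zero]
    ring
end
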